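/- arXiv:1807.11465 — 7 statements merged into one kernel-verified Lean document; each statement's English description precedes it below -/
import Mathlib

section
/- Let Σ = (Γ, σ) be a signed graph whose underlying graph Γ is a circle (cycle), and let a be a nonzero signed color. Then Σ admits a proper edge coloring using only colors from {+a, −a} if and only if Σ is positive (the product of its edge signs is +1); moreover, when Σ is positive it has exactly two such colorings. -/
open SimpleGraph

/-- The signed color set `M_n`: for `n = 2k+1` it is `{0, ±1, …, ±k}`,
and for `n = 2k` it is `{±1, …, ±k}`. -/
def Mset (n : ℕ) : Set ℤ :=
  {a : ℤ | 2 * a.natAbs ≤ n ∧ (a = 0 → Odd n)}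

/-- The incidences of a simple graph: pairs `(v, e)` with `e` an edge and `v ∈ e`. -/
def Inc {V : Type*} (G : SimpleGraph V) : Type _ :=
  {p : V × Sym2 V // p.2 ∈ G.edgeSet ∧ p.1 ∈ p.2}

/-- An edge coloring of the signed graph `(G, σ)` using colors from the set `S`:
an assignment of colors to incidences with `γ(v,e) = -σ(e)·γ(w,e)` for each
edge `e : vw`. -/
def IsEdgeColoringWith {V : Type*} (G : SimpleGraph V) (σ : Sym2 V → ℤ) (S : Set ℤ)
    (γ : Inc G → ℤ) : Prop :=
  (∀ i, γ i ∈ S) ∧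
  ∀ ⦃v w : V⦄ (h : G.Adj v w),
    γ ⟨(v, s(v, w)), G.mem_edgeSet.mpr h, Sym2.mem_mk_left v w⟩ =
      -σ s(v, w) * γ ⟨(w, s(v, w)), G.mem_edgeSet.mpr h, Sym2.mem_mk_right v w⟩

/-- Properness: distinct edges incident to a common vertex receive distinct colors
at that vertex. -/
def IsProperInc {V : Type*} (G : SimpleGraph V) (γ : Inc G → ℤ) : Prop :=
  ∀ i j : Inc G, i.1.1 = j.1.1 → i.1.2 ≠ j.1.2 → γ i ≠ γ j

/-!
Write a coloring with colors `±a` as `γ i = a * s i` for a sign function `s` on the incidences.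
At a vertex of degree two, properness says that the product of `s` over its two incidences is
`-1`; the coloring rule at an edge `e` says that the product over its two ends is `-σ e`. So the
colorings form the fiber over `(-1, -σ)` of the homomorphism sending `s` to its vertex and
edge products. By connectivity its kernel consists of the two constant functions,
and there are `|V| + |E|` incidences, so its image has index two in `(V → ℤˣ) × (E → ℤˣ)`.
Every incidence is counted once at its vertex and once at its edge, so the image lies in the
kernel of the total product, which also has index two; hence the two agree. Thus `(-1, -σ)` is
attained iff `(-1) ^ (|V| + |E|) * ∏ σ = ∏ σ` equals `1`, and then the fiber is a coset of the
kernel, with two elements.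
-/

open Finset

section GroupCounting

variable {M N P : Type*} [Group M] [Group N] [Group P]

theorem MonoidHom.range_eq_ker_of_card_eq [Finite M] [Finite N] (φ : M →* N) (χ : N →* P)
    (hcomp : ∀ x, χ (φ x) = 1) (hcard : Nat.card M = Nat.card N)
    (hker : Nat.card φ.ker = Nat.card χ.range) : φ.range = χ.ker := by
  refine Subgroup.eq_of_le_of_card_ge (fun _ ⟨x, hx⟩ => hx ▸ hcomp x) (le_of_eq ?_)
  have hφ := φ.ker.card_mul_index
  have hχ := χ.ker.card_mul_index
  rw [Subgroup.index_ker] at hφ hχ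
  have : Finite χ.range := Finite.of_surjective _ χ.rangeRestrict_surjective
  refine Nat.eq_of_mul_eq_mul_left (Nat.card_pos (α := χ.range)) ?_
  rw [← hker, hφ, hcard, ← hχ, hker, mul_comm]

theorem MonoidHom.ncard_preimage_singleton_of_mem_range (φ : M →* N) {y : N}
    (hy : y ∈ φ.range) : (φ ⁻¹' {y}).ncard = Nat.card φ.ker := by
  obtain ⟨x, rfl⟩ := hy
  rw [← Nat.card_coe_set_eq]
  exact Nat.card_congr (φ.fiberEquivKer x)

end GroupCounting

namespace Int

theorem units_mul_eq_one_iff {u v : ℤˣ} : u * v = 1 ↔ u = v := by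
  rcases units_eq_one_or u with rfl | rfl <;> rcases units_eq_one_or v with rfl | rfl <;> decide

theorem units_mul_eq_neg_one_iff {u v : ℤˣ} : u * v = -1 ↔ u ≠ v := by
  rcases units_eq_one_or u with rfl | rfl <;> rcases units_eq_one_or v with rfl | rfl <;> decide

end Int

namespace Finset

variable {α : Type*} [DecidableEq α] {T : Finset α} {s : α → ℤˣ}

theorem prod_units_int_eq_one_iff_of_card_eq_two (hT : #T = 2) :
    ∏ i ∈ T, s i = 1 ↔ ∀ i ∈ T, ∀ j ∈ T, s i = s j := by
  obtain ⟨x, y, hxy, rfl⟩ := card_eq_two.mp hT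
  rw [prod_pair hxy, Int.units_mul_eq_one_iff]
  constructor
  · intro h i hi j hj
    simp only [mem_insert, mem_singleton] at hi hj
    rcases hi with rfl | rfl <;> rcases hj with rfl | rfl <;> simp [h]
  · exact fun h => h x (by simp) y (by simp)

theorem prod_units_int_eq_neg_one_iff_of_card_eq_two (hT : #T = 2) :
    ∏ i ∈ T, s i = -1 ↔ ∀ i ∈ T, ∀ j ∈ T, i ≠ j → s i ≠ s j := by
  obtain ⟨x, y, hxy, rfl⟩ := card_eq_two.mp hT
  rw [prod_pair hxy, Int.units_mul_eq_neg_one_iff]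
  constructor
  · intro h i hi j hj hij
    simp only [mem_insert, mem_singleton] at hi hj
    rcases hi with rfl | rfl <;> rcases hj with rfl | rfl <;> simp_all [eq_comm]
  · exact fun h => h x (by simp) y (by simp) hxy

end Finset

theorem Int.mul_units_inj {a : ℤ} (ha : a ≠ 0) {u v : ℤˣ} : a * u = a * v ↔ u = v :=
  (mul_right_inj' ha).trans Units.val_inj

theorem Int.exists_units_of_forall_mem_pair {X : Type*} {γ : X → ℤ} {a : ℤ}
    (h : ∀ i, γ i ∈ ({a, -a} : Set ℤ)) : ∃ s : X → ℤˣ, γ = fun i => a * s i := by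
  have hs : ∀ i, ∃ u : ℤˣ, γ i = a * u := fun i =>
    (h i).elim (fun h => ⟨1, by simp [h]⟩) (fun h => ⟨-1, by simp [show γ i = -a from h]⟩)
  choose s hs using hs
  exact ⟨s, funext hs⟩

def prodPairHom (α β M : Type*) [Fintype α] [Fintype β] [CommMonoid M] :
    (α → M) × (β → M) →* M where
  toFun x := (∏ a, x.1 a) * ∏ b, x.2 b
  map_one' := by simp
  map_mul' x y := by
    simp only [Prod.fst_mul, Prod.snd_mul, Pi.mul_apply, prod_mul_distrib]
    exact mul_mul_mul_comm _ _ _ _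

theorem prodPairHom_surjective {α β M : Type*} [Fintype α] [Fintype β] [CommMonoid M]
    [DecidableEq α] [Nonempty α] : Function.Surjective (prodPairHom α β M) := by
  intro u
  refine ⟨(Pi.mulSingle (Classical.arbitrary α) u, 1), ?_⟩
  simp [prodPairHom]

theorem SimpleGraph.Reachable.imp_of_adj {V : Type*} {G : SimpleGraph V} {P : V → Prop}
    (hP : ∀ ⦃v w⦄, G.Adj v w → P v → P w) {u v : V} (huv : G.Reachable u v) :
    P u → P v := by
  obtain ⟨p⟩ := huv
  induction p with
  | nil => exact id
  | cons h _ ih => exact ih ∘ hP h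

theorem SimpleGraph.card_edgeFinset_eq_card_of_degree_eq_two {V : Type*} [Fintype V]
    {G : SimpleGraph V} [DecidableRel G.Adj] (hreg : ∀ v, G.degree v = 2) :
    #G.edgeFinset = Fintype.card V := by
  have h := G.sum_degrees_eq_twice_card_edges
  simp only [hreg, sum_const, card_univ, smul_eq_mul] at h
  omega

theorem prodPairHom_neg_one_neg_of_degree_eq_two {V : Type*} [Fintype V] {G : SimpleGraph V}
    [DecidableRel G.Adj] (hreg : ∀ v, G.degree v = 2) (τ : G.edgeSet → ℤˣ) :
    prodPairHom V G.edgeSet ℤˣ (fun _ => -1, fun e => -τ e) = ∏ e, τ e := by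
  simp only [prodPairHom, MonoidHom.coe_mk, OneHom.coe_mk, prod_const, prod_neg, card_univ,
    ← G.edgeFinset_card, G.card_edgeFinset_eq_card_of_degree_eq_two hreg, ← mul_assoc,
    ← pow_add, ← two_mul, pow_mul, neg_one_sq, one_pow, one_mul]

namespace Inc

variable {V : Type*} {G : SimpleGraph V}

instance [Fintype V] [DecidableEq V] [DecidableRel G.Adj] : Fintype (Inc G) :=
  inferInstanceAs (Fintype {p : V × Sym2 V // p.2 ∈ G.edgeSet ∧ p.1 ∈ p.2})

instance [DecidableEq V] : DecidableEq (Inc G) :=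
  inferInstanceAs (DecidableEq {p : V × Sym2 V // p.2 ∈ G.edgeSet ∧ p.1 ∈ p.2})

theorem ext {i j : Inc G} (h : i.1 = j.1) : i = j := Subtype.ext h

def edge (i : Inc G) : G.edgeSet := ⟨i.1.2, i.2.1⟩

def left {v w : V} (h : G.Adj v w) : Inc G :=
  ⟨(v, s(v, w)), G.mem_edgeSet.mpr h, Sym2.mem_mk_left v w⟩

def right {v w : V} (h : G.Adj v w) : Inc G :=
  ⟨(w, s(v, w)), G.mem_edgeSet.mpr h, Sym2.mem_mk_right v w⟩

theorem left_ne_right {v w : V} (h : G.Adj v w) : left h ≠ right h :=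
  fun he => h.ne (congrArg (fun i : Inc G => i.1.1) he)

theorem nonempty_of_connected [Fintype V] [DecidableRel G.Adj] (hconn : G.Connected)
    (hreg : ∀ v, G.degree v = 2) : Nonempty (Inc G) := by
  obtain ⟨v⟩ := hconn.nonempty
  obtain ⟨w, h⟩ := (G.degree_pos_iff_exists_adj v).mp (by rw [hreg v]; norm_num)
  exact ⟨left h⟩

variable [Fintype V] [DecidableEq V] [DecidableRel G.Adj]

theorem filter_edge_eq_pair {v w : V} (h : G.Adj v w) :
    ({i | i.edge = ⟨s(v, w), G.mem_edgeSet.mpr h⟩} : Finset (Inc G)) = {left h, right h} := by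
  ext i
  simp only [mem_filter, mem_univ, true_and, mem_insert, mem_singleton, edge, Subtype.mk.injEq]
  constructor
  · intro he
    have hv := i.2.2
    rw [he, Sym2.mem_iff] at hv
    exact hv.imp (fun hv => ext (Prod.ext hv he)) (fun hw => ext (Prod.ext hw he))
  · rintro (rfl | rfl) <;> rfl

theorem card_filter_vertex_eq_degree (v : V) :
    #({i | i.1.1 = v} : Finset (Inc G)) = G.degree v := by
  rw [← G.card_incidenceFinset_eq_degree v]
  refine card_bij (fun i _ => i.1.2) (fun i hi => ?_) (fun i hi j hj he => ?_) (fun e he => ?_)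
  · rw [mem_filter] at hi
    exact (G.mem_incidenceFinset v _).mpr ⟨i.2.1, hi.2 ▸ i.2.2⟩
  · exact ext (Prod.ext ((mem_filter.mp hi).2.trans (mem_filter.mp hj).2.symm) he)
  · obtain ⟨he, hve⟩ := (G.mem_incidenceFinset v e).mp he
    exact ⟨⟨(v, e), he, hve⟩, mem_filter.mpr ⟨mem_univ _, rfl⟩, rfl⟩

theorem card_eq_sum_degree : Fintype.card (Inc G) = ∑ v, G.degree v := by
  rw [← card_univ, card_eq_sum_card_fiberwise (fun i _ => mem_univ (i.1.1))]
  exact sum_congr rfl fun v _ => card_filter_vertex_eq_degree v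

theorem card_filter_edge (e : G.edgeSet) : #({i | i.edge = e} : Finset (Inc G)) = 2 := by
  obtain ⟨e, he⟩ := e
  induction e using Sym2.ind with
  | _ v w => rw [filter_edge_eq_pair (G.mem_edgeSet.mp he), card_pair (left_ne_right _)]

theorem card_eq_card_add_card_edgeSet (hreg : ∀ v, G.degree v = 2) :
    Fintype.card (Inc G) = Fintype.card V + Fintype.card G.edgeSet := by
  rw [card_eq_sum_degree, ← G.edgeFinset_card, G.card_edgeFinset_eq_card_of_degree_eq_two hreg]
  simp [hreg, mul_two]

variable (G) in
def signProd : (Inc G → ℤˣ) →* (V → ℤˣ) × (G.edgeSet → ℤˣ) where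
  toFun s := (fun v => ∏ i with i.1.1 = v, s i, fun e => ∏ i with i.edge = e, s i)
  map_one' := Prod.ext (funext fun _ => prod_const_one) (funext fun _ => prod_const_one)
  map_mul' s t := by
    ext : 2 <;> simp only [Pi.mul_apply, Prod.fst_mul, Prod.snd_mul, prod_mul_distrib]

theorem prodPairHom_signProd (s : Inc G → ℤˣ) :
    prodPairHom V G.edgeSet ℤˣ (signProd G s) = 1 := by
  simp only [prodPairHom, signProd, MonoidHom.coe_mk, OneHom.coe_mk]
  rw [prod_fiberwise univ (fun i : Inc G => i.1.1), prod_fiberwise univ edge]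
  exact Int.units_mul_self _

theorem apply_eq_of_mem_ker_signProd (hconn : G.Connected) (hreg : ∀ v, G.degree v = 2)
    {s : Inc G → ℤˣ} (hs : s ∈ (signProd G).ker) (i j : Inc G) : s i = s j := by
  rw [MonoidHom.mem_ker, Prod.ext_iff, funext_iff, funext_iff] at hs
  have hvertex : ∀ k l : Inc G, k.1.1 = l.1.1 → s k = s l := fun k l hkl =>
    (prod_units_int_eq_one_iff_of_card_eq_two ((card_filter_vertex_eq_degree _).trans (hreg _))).mp
      (hs.1 k.1.1) k (by simp) l (by simp [hkl])
  have hedge : ∀ ⦃v w : V⦄ (h : G.Adj v w), s (left h) = s (right h) := fun v w h =>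
    (prod_units_int_eq_one_iff_of_card_eq_two (card_filter_edge _)).mp
      (hs.2 ⟨s(v, w), G.mem_edgeSet.mpr h⟩) _ (by simp [filter_edge_eq_pair h]) _
      (by simp [filter_edge_eq_pair h])
  have hpropagate : ∀ ⦃v w : V⦄, G.Adj v w →
      (∀ k : Inc G, k.1.1 = v → s k = s i) → ∀ k : Inc G, k.1.1 = w → s k = s i :=
    fun v w h hv k hk => by rw [hvertex k (right h) hk, ← hedge h, hv _ rfl]
  exact ((hconn.preconnected i.1.1 j.1.1).imp_of_adj hpropagate
    (fun k hk => hvertex k i hk) j rfl).symm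

theorem card_ker_signProd (hconn : G.Connected) (hreg : ∀ v, G.degree v = 2) :
    Nat.card (signProd G).ker = 2 := by
  have := nonempty_of_connected hconn hreg
  have hker : ((signProd G).ker : Set (Inc G → ℤˣ)) = Set.range (Function.const (Inc G)) := by
    ext s
    refine ⟨fun hs => ⟨s (Classical.arbitrary _), funext fun i =>
      apply_eq_of_mem_ker_signProd hconn hreg hs _ i⟩, ?_⟩
    rintro ⟨u, rfl⟩
    refine Prod.ext (funext fun v => ?_) (funext fun e => ?_) <;>
      simp only [signProd, MonoidHom.coe_mk, OneHom.coe_mk, Function.const_apply, prod_const]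
    · rw [card_filter_vertex_eq_degree, hreg, Int.units_sq]; rfl
    · rw [card_filter_edge, Int.units_sq]; rfl
  change Nat.card ((signProd G).ker : Set (Inc G → ℤˣ)) = 2
  rw [hker, Nat.card_range_of_injective (Function.const_injective), Nat.card_eq_fintype_card,
    Fintype.card_units_int]

theorem range_signProd (hconn : G.Connected) (hreg : ∀ v, G.degree v = 2) :
    (signProd G).range = (prodPairHom V G.edgeSet ℤˣ).ker := by
  have := hconn.nonempty
  refine MonoidHom.range_eq_ker_of_card_eq _ _ prodPairHom_signProd ?_ ?_
  · rw [Nat.card_prod, Nat.card_fun, Nat.card_fun, Nat.card_fun, ← pow_add]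
    simp only [Nat.card_eq_fintype_card, card_eq_card_add_card_edgeSet hreg]
  · rw [card_ker_signProd hconn hreg, MonoidHom.range_eq_top.mpr prodPairHom_surjective,
      Subgroup.card_top, Nat.card_eq_fintype_card, Fintype.card_units_int]

variable {a : ℤ} {σ : Sym2 V → ℤ} {τ : G.edgeSet → ℤˣ}

theorem prod_filter_edge_mk (s : Inc G → ℤˣ) {v w : V} (h : G.Adj v w) :
    ∏ i with i.edge = ⟨s(v, w), G.mem_edgeSet.mpr h⟩, s i = s (left h) * s (right h) := by
  rw [filter_edge_eq_pair h, prod_pair (left_ne_right h)]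

theorem isProperInc_iff (hreg : ∀ v, G.degree v = 2) (ha : a ≠ 0) (s : Inc G → ℤˣ) :
    IsProperInc G (fun i => a * s i) ↔ ∀ v, ∏ i with i.1.1 = v, s i = -1 := by
  simp only [prod_units_int_eq_neg_one_iff_of_card_eq_two
    ((card_filter_vertex_eq_degree _).trans (hreg _)), mem_filter, mem_univ, true_and]
  refine ⟨fun h v i hi j hj hij hs => ?_, fun h i j hv he => ?_⟩
  · have hv : i.1.1 = j.1.1 := hi.trans hj.symm
    exact h i j hv (fun he => hij (ext (Prod.ext hv he)))
      (congrArg (fun u : ℤˣ => a * (u : ℤ)) hs)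
  · exact fun hs => h _ i rfl j hv.symm (fun hij => he (hij ▸ rfl))
      ((Int.mul_units_inj ha).mp hs)

theorem isEdgeColoringWith_iff (ha : a ≠ 0) (hτ : ∀ e : G.edgeSet, (τ e : ℤ) = σ e)
    (s : Inc G → ℤˣ) :
    IsEdgeColoringWith G σ {a, -a} (fun i => a * s i) ↔
      ∀ e, ∏ i with i.edge = e, s i = -τ e := by
  have hcolors : ∀ i, a * (s i : ℤ) ∈ ({a, -a} : Set ℤ) := fun i => by
    rcases Int.units_eq_one_or (s i) with h | h <;> simp [h]
  have hedge : ∀ ⦃v w : V⦄ (h : G.Adj v w),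
      a * (s (left h) : ℤ) = -σ s(v, w) * (a * s (right h)) ↔
        s (left h) * s (right h) = -τ ⟨s(v, w), G.mem_edgeSet.mpr h⟩ := by
    intro v w h
    rw [← eq_mul_inv_iff_mul_eq, Int.units_inv_eq_self, ← Int.mul_units_inj ha]
    push_cast
    rw [hτ]
    constructor <;> intro hs <;> linear_combination hs
  rw [IsEdgeColoringWith, and_iff_right hcolors]
  refine ⟨fun h ⟨e, he⟩ => ?_,
    fun h v w hvw => (hedge hvw).mpr ((prod_filter_edge_mk s hvw).symm.trans (h _))⟩
  induction e using Sym2.ind with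
  | _ v w =>
    have hvw := G.mem_edgeSet.mp he
    exact (prod_filter_edge_mk s hvw).trans ((hedge hvw).mp (h hvw))

theorem isEdgeColoringWith_and_isProperInc_iff (hreg : ∀ v, G.degree v = 2) (ha : a ≠ 0)
    (hτ : ∀ e : G.edgeSet, (τ e : ℤ) = σ e) (s : Inc G → ℤˣ) :
    (IsEdgeColoringWith G σ {a, -a} (fun i => a * s i) ∧ IsProperInc G (fun i => a * s i)) ↔
      signProd G s = (fun _ => -1, fun e => -τ e) := by
  rw [isEdgeColoringWith_iff ha hτ, isProperInc_iff hreg ha, Prod.ext_iff, funext_iff,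
    funext_iff, and_comm]
  rfl

theorem setOf_isEdgeColoringWith_and_isProperInc_eq_image (hreg : ∀ v, G.degree v = 2)
    (ha : a ≠ 0) (hτ : ∀ e : G.edgeSet, (τ e : ℤ) = σ e) :
    {γ : Inc G → ℤ | IsEdgeColoringWith G σ {a, -a} γ ∧ IsProperInc G γ} =
      (fun s i => a * s i) '' (signProd G ⁻¹' {(fun _ => -1, fun e => -τ e)}) := by
  ext γ
  constructor
  · intro hγ
    obtain ⟨s, rfl⟩ := Int.exists_units_of_forall_mem_pair hγ.1.1
    exact ⟨s, (isEdgeColoringWith_and_isProperInc_iff hreg ha hτ s).mp hγ, rfl⟩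
  · rintro ⟨s, hs, rfl⟩
    exact (isEdgeColoringWith_and_isProperInc_iff hreg ha hτ s).mpr hs

end Inc

open Inc in
/-- A signed circle (a connected `2`-regular signed graph) admits a proper edge coloring
using only the colors `+a, -a` (for `a ≠ 0`) if and only if it is positive (the product
of its edge signs is `+1`); moreover a positive circle has exactly two such colorings. -/
theorem signed_circle_two_colorable_iff_positive {V : Type*} [Fintype V] [DecidableEq V]
    (G : SimpleGraph V) [DecidableRel G.Adj]
    (hconn : G.Connected) (hreg : ∀ v : V, G.degree v = 2)
    (σ : Sym2 V → ℤ) (hσ : ∀ e ∈ G.edgeSet, σ e = 1 ∨ σ e = -1)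
    (a : ℤ) (ha : a ≠ 0) :
    ((∃ γ : Inc G → ℤ, IsEdgeColoringWith G σ {a, -a} γ ∧ IsProperInc G γ) ↔
      ∏ e ∈ G.edgeFinset, σ e = 1) ∧
    (∏ e ∈ G.edgeFinset, σ e = 1 →
      {γ : Inc G → ℤ | IsEdgeColoringWith G σ {a, -a} γ ∧
        IsProperInc G γ}.ncard = 2) := by
  set τ : G.edgeSet → ℤˣ := fun e => (Int.isUnit_iff.mpr (hσ e e.2)).unit
  have hτ : ∀ e, (τ e : ℤ) = σ e := fun e => IsUnit.unit_spec _
  have hcolorings := setOf_isEdgeColoringWith_and_isProperInc_eq_image hreg ha hτ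
  have hrange :
      (fun _ => -1, fun e => -τ e) ∈ (signProd G).range ↔ ∏ e ∈ G.edgeFinset, σ e = 1 := by
    rw [range_signProd hconn hreg, MonoidHom.mem_ker,
      prodPairHom_neg_one_neg_of_degree_eq_two hreg, ← Units.val_inj, Units.coe_prod, Units.val_one,
      prod_subtype (F := G.fintypeEdgeSet) _ fun _ => G.mem_edgeFinset]
    simp only [hτ]
  have hinj : Function.Injective fun (s : Inc G → ℤˣ) i => a * (s i : ℤ) := fun s t hst =>
    funext fun i => (Int.mul_units_inj ha).mp (congrFun hst i)
  refine ⟨?_, fun hpos => ?_⟩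
  · change Set.Nonempty {γ : Inc G → ℤ | IsEdgeColoringWith G σ {a, -a} γ ∧
      IsProperInc G γ} ↔ _
    rw [hcolorings, Set.image_nonempty, Set.preimage_singleton_nonempty, ← hrange]
    rfl
  · rw [hcolorings, Set.ncard_image_of_injective _ hinj,
      MonoidHom.ncard_preimage_singleton_of_mem_range _ (hrange.mpr hpos),
      card_ker_signProd hconn hreg]
end

section
/- Let γ be a proper n-edge coloring of the signed graph Σ = (Γ, σ). Then: (i) the set Σ₀ of edges colored 0 (at both incidences) is a matching in Γ; and (ii) for every nonzero magnitude a, the spanning subgraph Σ_a consisting of the edges all of whose incidences are colored +a or −a has maximum degree at most 2, and every circle of Γ contained in Σ_a is positive (so Σ_a is balanced, i.e., a disjoint union of paths and positive circles). -/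
open SimpleGraph

/-- An `n`-edge coloring of the signed graph `(G, σ)`: an assignment of colors from `Mset n`
to the incidences of `G` such that `γ(v,e) = -σ(e)·γ(w,e)` for each edge `e : vw`. -/
structure SColoring {V : Type*} (G : SimpleGraph V) (σ : Sym2 V → ℤ) (n : ℕ) where
  col : V → Sym2 V → ℤ
  mem_colors : ∀ ⦃v w : V⦄, G.Adj v w → col v s(v, w) ∈ Mset n
  compat : ∀ ⦃v w : V⦄, G.Adj v w → col v s(v, w) = -σ s(v, w) * col w s(v, w)

namespace SColoring

variable {V : Type*} {G : SimpleGraph V} {σ : Sym2 V → ℤ} {n : ℕ}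

/-- A coloring is proper if distinct edges incident to a common vertex receive
distinct colors at that vertex. -/
def Proper (c : SColoring G σ n) : Prop :=
  ∀ ⦃v w x : V⦄, G.Adj v w → G.Adj v x → w ≠ x → c.col v s(v, w) ≠ c.col v s(v, x)

/-- A coloring is zero-free if the color `0` is never used. -/
def ZeroFree (c : SColoring G σ n) : Prop :=
  ∀ ⦃v w : V⦄, G.Adj v w → c.col v s(v, w) ≠ 0

/-- The color `a` is absent at the vertex `v` if no edge incident to `v` is
colored `a` at `v`. -/
def Absent (c : SColoring G σ n) (a : ℤ) (v : V) : Prop :=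
  ∀ ⦃w : V⦄, G.Adj v w → c.col v s(v, w) ≠ a

end SColoring

/-- The magnitude graph `Σ_a`: the spanning subgraph of `G` consisting of the edges
all of whose incidences are colored `+a` or `-a`. -/
def magGraph {V : Type*} (G : SimpleGraph V) (col : V → Sym2 V → ℤ) (a : ℤ) :
    SimpleGraph V where
  Adj v w := G.Adj v w ∧ (col v s(v, w) = a ∨ col v s(v, w) = -a) ∧
    (col w s(v, w) = a ∨ col w s(v, w) = -a)
  symm := by
    constructor
    rintro v w ⟨h1, h2, h3⟩
    exact ⟨h1.symm, by rwa [Sym2.eq_swap], by rwa [Sym2.eq_swap]⟩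
  loopless := by
    constructor
    intro v h
    exact G.irrefl h.1

/-! Colors at a vertex are pairwise distinct, so a vertex meets at most two edges of `Σ_a`,
and when it meets two, their colors there are `a` and `-a`. Along a trail in `Σ_a`,
the compatibility rule `γ(v,e) = -σ(e) γ(w,e)` combined with this sign flip at `w` gives
`γ(v,e) = σ(e) γ(w,f)` for the next edge `f`. Going once around a circle therefore multiplies
the nonzero color `±a` by the sign of the circle, which must then be `1`. -/

namespace SColoring

variable {V : Type*} {G : SimpleGraph V} {σ : Sym2 V → ℤ} {n : ℕ} {c : SColoring G σ n}
  {a : ℤ}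

lemma Proper.eq_of_col_eq (hc : c.Proper) {v w x : V} (hw : G.Adj v w) (hx : G.Adj v x)
    (h : c.col v s(v, w) = c.col v s(v, x)) : w = x :=
  not_not.1 fun hne => hc hw hx hne h

lemma col_of_magGraph_adj {v w : V} (h : (magGraph G c.col a).Adj v w) :
    c.col v s(v, w) = a ∨ c.col v s(v, w) = -a :=
  h.2.1

lemma Proper.col_eq_neg_of_magGraph_adj (hc : c.Proper) {v w x : V}
    (hw : (magGraph G c.col a).Adj v w) (hx : (magGraph G c.col a).Adj v x) (hne : w ≠ x) :
    c.col v s(v, w) = -c.col v s(v, x) := by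
  have h := hc hw.1 hx.1 hne
  rcases col_of_magGraph_adj hw with h1 | h1 <;>
    rcases col_of_magGraph_adj hx with h2 | h2 <;> omega

lemma Proper.ncard_neighborSet_magGraph_le_two (hc : c.Proper) (v : V) :
    ((magGraph G c.col a).neighborSet v).ncard ≤ 2 :=
  calc ((magGraph G c.col a).neighborSet v).ncard
      ≤ ({a, -a} : Set ℤ).ncard :=
        Set.ncard_le_ncard_of_injOn (fun w => c.col v s(v, w))
          (fun _ hw => col_of_magGraph_adj hw)
          (fun _ hw _ hx h => hc.eq_of_col_eq hw.1 hx.1 h)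
    _ ≤ ({-a} : Set ℤ).ncard + 1 := Set.ncard_insert_le _ _
    _ = 2 := by rw [Set.ncard_singleton]

lemma Proper.col_snd_eq_neg_prod_mul_col_penultimate (hc : c.Proper) :
    ∀ {u v : V} (W : (magGraph G c.col a).Walk u v), W.IsTrail → ¬W.Nil →
      c.col u s(u, W.snd) = -(W.edges.map σ).prod * c.col v s(W.penultimate, v)
  | _, _, .nil, _, hnil => absurd Walk.Nil.nil hnil
  | _, _, .cons h .nil, _, _ => by simpa using c.compat h.1
  | u, _, .cons (v := x) h (.cons (v := y) h' W), hW, _ => by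
    have hux : u ≠ y := by
      rintro rfl
      exact (Walk.isTrail_cons _ _).1 hW |>.2 (by simp [Sym2.eq_swap])
    have hflip : c.col x s(x, u) = -c.col x s(x, y) :=
      hc.col_eq_neg_of_magGraph_adj h.symm h' hux
    have ih := hc.col_snd_eq_neg_prod_mul_col_penultimate (.cons h' W) hW.of_cons (by simp)
    rw [Walk.snd_cons] at ih
    rw [Walk.snd_cons, Walk.penultimate_cons_of_not_nil _ _ (by simp), Walk.edges_cons,
      List.map_cons, List.prod_cons, c.compat h.1, Sym2.eq_swap, hflip, ih]
    ring

lemma Proper.prod_sign_eq_one_of_isCycle (hc : c.Proper) (ha : a ≠ 0) {v : V}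
    {W : (magGraph G c.col a).Walk v v} (hW : W.IsCycle) : (W.edges.map σ).prod = 1 := by
  have hsnd := W.adj_snd hW.not_nil
  have hpen := (W.adj_penultimate hW.not_nil).symm
  have htransport := hc.col_snd_eq_neg_prod_mul_col_penultimate W hW.isTrail hW.not_nil
  rw [Sym2.eq_swap (a := W.penultimate),
    hc.col_eq_neg_of_magGraph_adj hpen hsnd hW.snd_ne_penultimate.symm] at htransport
  have hne : c.col v s(v, W.snd) ≠ 0 := by
    rcases col_of_magGraph_adj hsnd with h | h <;> omega
  exact mul_right_cancel₀ hne (by linear_combination -htransport)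

end SColoring

theorem magnitude_subgraphs_general {V : Type*} (G : SimpleGraph V)
    (σ : Sym2 V → ℤ)
    (n : ℕ) (c : SColoring G σ n) (hc : c.Proper) :
    (∀ ⦃v w x : V⦄, G.Adj v w → G.Adj v x →
      c.col v s(v, w) = 0 → c.col v s(v, x) = 0 → w = x) ∧
    (∀ a : ℤ, a ≠ 0 →
      (∀ v : V, ((magGraph G c.col a).neighborSet v).ncard ≤ 2) ∧
      (∀ (v : V) (W : (magGraph G c.col a).Walk v v), W.IsCycle →
        (W.edges.map σ).prod = 1)) :=
  ⟨fun _ _ _ hw hx h0w h0x => hc.eq_of_col_eq hw hx (h0w.trans h0x.symm),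
    fun _ ha => ⟨hc.ncard_neighborSet_magGraph_le_two,
      fun _ _ hW => hc.prod_sign_eq_one_of_isCycle ha hW⟩⟩

/-- For a proper `n`-edge coloring `γ` of `Σ`: (i) the edges colored `0` form a matching;
(ii) for every nonzero magnitude `a`, the magnitude graph `Σ_a` has maximum degree at
most `2` and every circle contained in it is positive, i.e. `Σ_a` is balanced. -/
theorem magnitude_subgraphs {V : Type*} [Fintype V] (G : SimpleGraph V)
    (σ : Sym2 V → ℤ) (hσ : ∀ e ∈ G.edgeSet, σ e = 1 ∨ σ e = -1)
    (n : ℕ) (c : SColoring G σ n) (hc : c.Proper) :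
    (∀ ⦃v w x : V⦄, G.Adj v w → G.Adj v x →
      c.col v s(v, w) = 0 → c.col v s(v, x) = 0 → w = x) ∧
    (∀ a : ℤ, a ≠ 0 →
      (∀ v : V, ((magGraph G c.col a).neighborSet v).ncard ≤ 2) ∧
      (∀ (v : V) (W : (magGraph G c.col a).Walk v v), W.IsCycle →
        (W.edges.map σ).prod = 1)) :=
  magnitude_subgraphs_general G σ n c hc
end

section
/- Suppose the a/b-Kempe chain K_{a,b}(v₀, v_m) of a proper n-edge coloring of a signed graph has a repeated vertex, say v_j = v_s with j < s. Then the subtrail (v_j, v_{j+1}, …, v_s) of the chain contains an odd number of positive edges. -/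
open SimpleGraph

/-- The defining properties of an `a/b`-Kempe trail of the coloring `c` starting at the
vertex `v₀` (where `a` is absent at `v₀` and the chain starts with a `b`-colored edge):
it is a trail whose edge-color magnitudes alternate `|b|, |a|, |b|, …`, and at each
interior vertex `v i` the two incident chain edges are colored `(-1)^{t_i}·a` and
`(-1)^{t_i}·b`, where `t_i` is the number of positive edges among the first `i` edges
of the trail. -/
def IsKempeTrail {V : Type*} {G : SimpleGraph V} {σ : Sym2 V → ℤ} {n : ℕ}
    (c : SColoring G σ n) (a b : ℤ) {v₀ vm : V} (W : G.Walk v₀ vm) : Prop :=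
  W.IsTrail ∧
  c.Absent a v₀ ∧
  (0 < W.length → c.col v₀ s(v₀, W.getVert 1) = b) ∧
  (∀ i < W.length,
    (c.col (W.getVert i) s(W.getVert i, W.getVert (i + 1))).natAbs =
      if Even i then b.natAbs else a.natAbs) ∧
  (∀ i, 0 < i → i < W.length →
    ({c.col (W.getVert i) s(W.getVert (i - 1), W.getVert i),
      c.col (W.getVert i) s(W.getVert i, W.getVert (i + 1))} : Set ℤ) =
    {(-1) ^ ((W.edges.take i).countP fun e => σ e == 1) * a,
     (-1) ^ ((W.edges.take i).countP fun e => σ e == 1) * b})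

/-- The `a/b`-Kempe chain `K_{a,b}(v₀, vm)`: a *maximal* `a/b`-Kempe trail. -/
def IsKempeChain {V : Type*} {G : SimpleGraph V} {σ : Sym2 V → ℤ} {n : ℕ}
    (c : SColoring G σ n) (a b : ℤ) {v₀ vm : V} (W : G.Walk v₀ vm) : Prop :=
  IsKempeTrail c a b W ∧
    ∀ ⦃x : V⦄ (h : G.Adj vm x), ¬IsKempeTrail c a b (W.concat h)

/-!
Write `ε_i = (-1)^{t_i}`. Crossing the edge `v_i v_{i+1}` multiplies the color by `-σ(e)` and
`ε` by `-σ(e)` as well, so the colors at both ends of every chain edge lie in `ε·{a, b}` at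
that end. If the closed subtrail `v_j … v_k` had an even number of positive edges, then
`ε_k = ε_j` and the last edge of the subtrail would carry a color of `ε_j·{a, b}` at `v_j`.
At an interior `v_j` both of these colors are already used by the two chain edges through
`v_j`; at `v_0` the color `a` is absent and `b` is used by the first edge. Properness then
forces the last edge to coincide with an earlier chain edge, which a trail forbids.
-/

namespace SimpleGraph.Walk

variable {V : Type*} {G : SimpleGraph V} {u v : V}

lemma IsTrail.eq_of_edge_eq {W : G.Walk u v} (hW : W.IsTrail) {p q : ℕ}
    (hp : p < W.length) (hq : q < W.length)
    (h : s(W.getVert p, W.getVert (p + 1)) = s(W.getVert q, W.getVert (q + 1))) : p = q := by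
  rw [← getElem_edges (by simpa), ← getElem_edges (by simpa)] at h
  exact hW.edges_nodup.getElem_inj_iff.mp h

def prefixSign (σ : Sym2 V → ℤ) (W : G.Walk u v) (i : ℕ) : ℤ :=
  (-1) ^ ((W.edges.take i).countP fun e => σ e == 1)

variable {σ : Sym2 V → ℤ} (W : G.Walk u v)

@[simp]
lemma prefixSign_zero : W.prefixSign σ 0 = 1 := by
  simp [prefixSign]

lemma prefixSign_succ {i : ℕ} (hi : i < W.length)
    (hσ : σ s(W.getVert i, W.getVert (i + 1)) = 1 ∨ σ s(W.getVert i, W.getVert (i + 1)) = -1) :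
    W.prefixSign σ (i + 1) = -σ s(W.getVert i, W.getVert (i + 1)) * W.prefixSign σ i := by
  have htake : W.edges.take (i + 1) = W.edges.take i ++ [s(W.getVert i, W.getVert (i + 1))] := by
    rw [List.take_add_one, List.getElem?_eq_getElem (by simpa), getElem_edges]
    rfl
  rcases hσ with h | h <;> simp [prefixSign, htake, List.countP_append, h, pow_succ]

lemma prefixSign_eq_mul {j k : ℕ} (hjk : j ≤ k) :
    W.prefixSign σ k =
      W.prefixSign σ j * (-1) ^ (((W.edges.drop j).take (k - j)).countP fun e => σ e == 1) := by
  obtain ⟨d, rfl⟩ := Nat.exists_eq_add_of_le hjk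
  simp [prefixSign, List.take_add, List.countP_append, pow_add]

end SimpleGraph.Walk

lemma SColoring.Proper.eq_of_col_eq_s11 {V : Type*} {G : SimpleGraph V} {σ : Sym2 V → ℤ} {n : ℕ}
    {c : SColoring G σ n} (hc : c.Proper) {v w x : V} (hw : G.Adj v w) (hx : G.Adj v x)
    (h : c.col v s(v, w) = c.col v s(v, x)) : w = x := by
  by_contra hne
  exact hc hw hx hne h

namespace IsKempeTrail

variable {V : Type*} {G : SimpleGraph V} {σ : Sym2 V → ℤ} {n : ℕ} {c : SColoring G σ n}
  {a b : ℤ} {v₀ vm : V} {W : G.Walk v₀ vm}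

lemma col_out_mem (hW : IsKempeTrail c a b W) {i : ℕ} (hi : i < W.length) :
    c.col (W.getVert i) s(W.getVert i, W.getVert (i + 1)) ∈
      ({W.prefixSign σ i * a, W.prefixSign σ i * b} : Set ℤ) := by
  obtain ⟨-, -, hstart, -, hint⟩ := hW
  rcases Nat.eq_zero_or_pos i with rfl | hpos
  · simpa using Or.inr (hstart hi)
  · rw [Walk.prefixSign, ← hint i hpos hi]
    exact Set.mem_insert_of_mem _ rfl

lemma col_in_mem (hW : IsKempeTrail c a b W) (hσ : ∀ e ∈ G.edgeSet, σ e = 1 ∨ σ e = -1)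
    {i : ℕ} (hi : i < W.length) :
    c.col (W.getVert (i + 1)) s(W.getVert i, W.getVert (i + 1)) ∈
      ({W.prefixSign σ (i + 1) * a, W.prefixSign σ (i + 1) * b} : Set ℤ) := by
  have hadj := W.adj_getVert_succ hi
  have hcompat := c.compat hadj.symm
  rw [Sym2.eq_swap] at hcompat
  rw [hcompat, W.prefixSign_succ hi (hσ _ hadj)]
  rcases hW.col_out_mem hi with h | h <;>
    simp only [Set.mem_insert_iff, Set.mem_singleton_iff] at h ⊢
  · exact Or.inl (by rw [h]; ring)
  · exact Or.inr (by rw [h]; ring)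

lemma eq_getVert_of_col_mem (hW : IsKempeTrail c a b W) (hc : c.Proper) {j : ℕ}
    (hj : j < W.length) {x : V} (hx : G.Adj (W.getVert j) x)
    (hcol : c.col (W.getVert j) s(W.getVert j, x) ∈
      ({W.prefixSign σ j * a, W.prefixSign σ j * b} : Set ℤ)) :
    x = W.getVert (j + 1) ∨ ∃ i, i + 1 = j ∧ x = W.getVert i := by
  obtain ⟨-, habs, hstart, -, hint⟩ := hW
  have hnext := W.adj_getVert_succ hj
  cases j with
  | zero =>
    simp only [W.prefixSign_zero, one_mul, Set.mem_insert_iff, Set.mem_singleton_iff] at hcol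
    rw [W.getVert_zero] at hx hnext hcol
    rcases hcol with ha | hb
    · exact absurd ha (habs hx)
    · exact Or.inl (hc.eq_of_col_eq_s11 hx hnext (hb.trans (hstart hj).symm))
  | succ i =>
    have hprev := W.adj_getVert_succ (show i < W.length by omega)
    rw [Walk.prefixSign, ← hint (i + 1) i.succ_pos hj] at hcol
    simp only [Set.mem_insert_iff, Set.mem_singleton_iff, add_tsub_cancel_right] at hcol
    rcases hcol with h | h
    · rw [Sym2.eq_swap (a := W.getVert i)] at h
      exact Or.inr ⟨i, rfl, hc.eq_of_col_eq_s11 hx hprev.symm h⟩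
    · exact Or.inl (hc.eq_of_col_eq_s11 hx hnext h)

end IsKempeTrail

theorem kempeChain_self_intersection_odd_positive_general {V : Type*}
    (G : SimpleGraph V) (σ : Sym2 V → ℤ) (hσ : ∀ e ∈ G.edgeSet, σ e = 1 ∨ σ e = -1)
    (n : ℕ) (c : SColoring G σ n) (hc : c.Proper)
    (a b : ℤ) {v₀ vm : V}
    (W : G.Walk v₀ vm) (hW : IsKempeChain c a b W)
    (j k : ℕ) (hjk : j < k) (hk : k ≤ W.length)
    (hrep : W.getVert j = W.getVert k) :
    Odd (((W.edges.drop j).take (k - j)).countP fun e => σ e == 1) := by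
  obtain ⟨hW, -⟩ := hW
  obtain ⟨m, rfl⟩ : ∃ m, k = m + 1 := ⟨k - 1, by omega⟩
  have hm : m < W.length := by omega
  by_contra heven
  rw [Nat.not_odd_iff_even] at heven
  have hsign : W.prefixSign σ (m + 1) = W.prefixSign σ j := by
    rw [W.prefixSign_eq_mul hjk.le, heven.neg_one_pow, mul_one]
  have hin := hW.col_in_mem hσ hm
  rw [hsign, ← hrep, Sym2.eq_swap] at hin
  have hadj : G.Adj (W.getVert j) (W.getVert m) := hrep ▸ (W.adj_getVert_succ hm).symm
  rcases hW.eq_getVert_of_col_mem hc (by omega) hadj hin with hnext | ⟨i, rfl, hprev⟩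
  · obtain rfl : m = j :=
      hW.1.eq_of_edge_eq hm (q := j) (by omega) (by rw [hnext, ← hrep, Sym2.eq_swap])
    exact (W.adj_getVert_succ hm).ne hrep
  · have := hW.1.eq_of_edge_eq hm (q := i) (by omega) (by rw [hprev, ← hrep])
    omega

/-- If the `a/b`-Kempe chain `K_{a,b}(v₀, vm)` of a proper `n`-edge coloring has a
repeated vertex `v j = v k` with `j < k`, then the subtrail `(v j, …, v k)` contains
an odd number of positive edges. -/
theorem kempeChain_self_intersection_odd_positive {V : Type*} [Fintype V]
    (G : SimpleGraph V) (σ : Sym2 V → ℤ) (hσ : ∀ e ∈ G.edgeSet, σ e = 1 ∨ σ e = -1)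
    (n : ℕ) (c : SColoring G σ n) (hc : c.Proper)
    (a b : ℤ) (ha : a ∈ Mset n) (hb : b ∈ Mset n) {v₀ vm : V}
    (hbpres : ∃ w : V, G.Adj v₀ w ∧ c.col v₀ s(v₀, w) = b)
    (W : G.Walk v₀ vm) (hW : IsKempeChain c a b W)
    (j k : ℕ) (hjk : j < k) (hk : k ≤ W.length)
    (hrep : W.getVert j = W.getVert k) :
    Odd (((W.edges.drop j).take (k - j)).countP fun e => σ e == 1) :=
  kempeChain_self_intersection_odd_positive_general G σ hσ n c hc a b W hW j k hjk hk hrep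
end

section
/- For every signature σ : E(K_{3,3}) → {+1, −1} on the complete bipartite graph K_{3,3}, the signed graph (K_{3,3}, σ) admits a proper 3-edge coloring (using colors from M₃ = {−1, 0, +1}). -/
open SimpleGraph

/-! A proper coloring of a signed `K_{3,3}` amounts to a `3 × 3` array `A` of colors in
`{-1, 0, 1}` (those at the left ends of the edges) whose rows are injective and whose columns
become injective once entry `ij` is multiplied by its sign `s i j`. Of the sign products along
the three cyclic diagonals two agree, so on the hexagon formed by their six cells the signs
multiply to `1` and hence factor as `a i * b j`. A cyclic Latin square with `0` on the third
diagonal and `±1` elsewhere, twisted row by row by `a`, is then such an array. -/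

open Function

theorem mem_Mset_three {a : ℤ} : a ∈ Mset 3 ↔ a.natAbs ≤ 1 := by
  simp only [Mset, Set.mem_ofPred_eq]
  exact ⟨fun h => by omega, fun h => ⟨by omega, fun _ => by decide⟩⟩

theorem Int.units_mul_self_mul (u v : ℤˣ) : u * (u * v) = v := by
  rw [← mul_assoc, Int.units_mul_self, one_mul]

section SignedLatin

variable {α β : Type*}

/-- `A` is the table of colors at the left ends of the edges of a signed complete bipartite
graph with signs `s`: the color at the right end of edge `ij` is then `-s i j * A i j`. -/
structure IsSignedLatin (n : ℕ) (s : α → β → ℤˣ) (A : α → β → ℤ) : Prop where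
  mem : ∀ i j, A i j ∈ Mset n
  row_injective : ∀ i, Injective (A i)
  col_injective : ∀ j, Injective fun i => (s i j : ℤ) * A i j

theorem mul_units_mem_Mset_iff {n : ℕ} (u : ℤˣ) {a : ℤ} : (u : ℤ) * a ∈ Mset n ↔ a ∈ Mset n := by
  simp [Mset, Int.natAbs_mul]

theorem neg_mem_Mset_iff {n : ℕ} {a : ℤ} : -a ∈ Mset n ↔ a ∈ Mset n := by
  simp [Mset]

open Classical in
noncomputable def incidenceFun {V : Type*} (f : V → V → ℤ) (v : V) (e : Sym2 V) : ℤ :=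
  if h : v ∈ e then f v (Sym2.Mem.other h) else 0

theorem incidenceFun_mk {V : Type*} (f : V → V → ℤ) (v w : V) :
    incidenceFun f v s(v, w) = f v w := by
  rw [incidenceFun, dif_pos (Sym2.mem_mk_left v w)]
  exact congrArg (f v) (Sym2.congr_right.mp (Sym2.other_spec _))

theorem incidenceFun_mk' {V : Type*} (f : V → V → ℤ) (v w : V) :
    incidenceFun f w s(v, w) = f w v := by
  rw [Sym2.eq_swap, incidenceFun_mk]

theorem IsSignedLatin.exists_proper {n : ℕ} {σ : Sym2 (α ⊕ β) → ℤ} {s : α → β → ℤˣ}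
    (hs : ∀ i j, σ s(.inl i, .inr j) = s i j) {A : α → β → ℤ} (hA : IsSignedLatin n s A) :
    ∃ c : SColoring (completeBipartiteGraph α β) σ n, c.Proper := by
  let f : α ⊕ β → α ⊕ β → ℤ
    | .inl i, .inr j => A i j
    | .inr j, .inl i => -(s i j * A i j)
    | _, _ => 0
  refine ⟨⟨incidenceFun f, ?_, ?_⟩, ?_⟩
  · rintro (i | j) (i' | j') hadj
    case inl.inr =>
      rw [incidenceFun_mk]
      exact hA.mem i j'
    case inr.inl =>
      rw [incidenceFun_mk]
      exact neg_mem_Mset_iff.mpr ((mul_units_mem_Mset_iff _).mpr (hA.mem i' j))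
    all_goals simp at hadj
  · rintro (i | j) (i' | j') hadj
    case inl.inr =>
      rw [incidenceFun_mk, incidenceFun_mk']
      show A i j' = -σ _ * -(s i j' * A i j')
      rw [hs, neg_mul_neg, ← mul_assoc, ← Units.val_mul, Int.units_mul_self, Units.val_one,
        one_mul]
    case inr.inl =>
      rw [incidenceFun_mk, incidenceFun_mk']
      show -(s i' j * A i' j) = -σ _ * A i' j
      rw [Sym2.eq_swap, hs, neg_mul]
    all_goals simp at hadj
  · rintro (i | j) (i' | j') (i'' | j'') h₁ h₂ hne
    case inl.inr.inr =>
      simp only [incidenceFun_mk]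
      exact (hA.row_injective i).ne (by rintro rfl; exact hne rfl)
    case inr.inl.inl =>
      simp only [incidenceFun_mk]
      exact neg_injective.ne ((hA.col_injective j).ne (by rintro rfl; exact hne rfl))
    all_goals simp at h₁ h₂

end SignedLatin

def diagProd (s : Fin 3 → Fin 3 → ℤˣ) (k : Fin 3) : ℤˣ := ∏ i, s i (i + k)

theorem exists_diagProd_add_one_eq (s : Fin 3 → Fin 3 → ℤˣ) :
    ∃ k, diagProd s (k + 1) = diagProd s (k + 2) := by
  obtain ⟨a, b, hab, h⟩ := Fintype.exists_ne_map_eq_of_card_lt (diagProd s) (by decide)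
  -- `-(a + b)` is the third element of `Fin 3`, as `0 + 1 + 2 = 0`
  refine ⟨-(a + b), ?_⟩
  fin_cases a <;> fin_cases b <;> first | exact absurd rfl hab | exact h | exact h.symm

theorem exists_eq_mul_of_ne_of_diagProd_eq {s : Fin 3 → Fin 3 → ℤˣ}
    (h : diagProd s 1 = diagProd s 2) :
    ∃ a b : Fin 3 → ℤˣ, ∀ i j, j ≠ i → s i j = a i * b j := by
  replace h : s 0 1 * s 1 2 * s 2 0 = s 0 2 * s 1 0 * s 2 1 := by
    simpa [diagProd, Fin.prod_univ_three] using h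
  -- `a 0 = 1`, then propagate around the hexagon; its last cell `(2, 0)` is where `h` is needed
  refine ⟨![1, s 1 2 * s 0 2, s 2 1 * s 0 1], ![s 1 2 * s 0 2 * s 1 0, s 0 1, s 0 2], ?_⟩
  intro i j hij
  fin_cases i <;> fin_cases j <;> first | exact absurd rfl hij |
    simp only [Fin.zero_eta, Fin.mk_one, Fin.reduceFinMk, Fin.isValue, Matrix.cons_val, one_mul]
  · exact (Int.units_mul_self_mul _ _).symm
  · rw [mul_assoc, Int.units_mul_self, mul_one]
  · calc s 2 0 = s 0 1 * s 1 2 * (s 0 1 * s 1 2 * s 2 0) := (Int.units_mul_self_mul _ _).symm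
      _ = s 0 1 * s 1 2 * (s 0 2 * s 1 0 * s 2 1) := by rw [h]
      _ = _ := by ac_rfl
  · rw [mul_assoc, Int.units_mul_self, mul_one]

theorem exists_eq_mul_of_sub_ne (s : Fin 3 → Fin 3 → ℤˣ) :
    ∃ k, ∃ a b : Fin 3 → ℤˣ, ∀ i j, j - i ≠ k → s i j = a i * b j := by
  obtain ⟨k, hk⟩ := exists_diagProd_add_one_eq s
  obtain ⟨a, b, hab⟩ := exists_eq_mul_of_ne_of_diagProd_eq (s := fun i j => s i (j + k))
    (by simpa [diagProd, add_comm, add_left_comm] using hk)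
  refine ⟨k, a, fun j => b (j - k), fun i j hij => ?_⟩
  simpa using hab i (j - k) fun h => hij (by rw [← h, sub_sub_cancel])

theorem isSignedLatin_of_eq_mul {s : Fin 3 → Fin 3 → ℤˣ} {k : Fin 3} {a b : Fin 3 → ℤˣ}
    (h : ∀ i j, j - i ≠ k → s i j = a i * b j) :
    IsSignedLatin 3 s fun i j => a i * ![0, 1, -1] (j - i - k) := by
  have hf : Injective ![(0 : ℤ), 1, -1] := by decide
  have hcol (i j : Fin 3) :
      (s i j : ℤ) * (a i * ![0, 1, -1] (j - i - k)) = b j * ![0, 1, -1] (j - i - k) := by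
    by_cases hd : j - i - k = 0
    · simp [hd]
    · rw [h i j fun h' => hd (by rw [h', sub_self]), ← mul_assoc, ← Units.val_mul,
        mul_right_comm, Int.units_mul_self, one_mul]
  refine ⟨fun i j => ?_, fun i => ?_, fun j => ?_⟩
  · rw [mem_Mset_three, Int.natAbs_mul, Int.units_natAbs, one_mul]
    generalize j - i - k = d
    fin_cases d <;> decide
  · exact (Units.isUnit _).mul_right_injective.comp
      (hf.comp (sub_left_injective.comp sub_left_injective))
  · simp only [hcol]
    exact (Units.isUnit _).mul_right_injective.comp
      (hf.comp (sub_left_injective.comp sub_right_injective))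

/-- Every signature on the complete bipartite graph `K_{3,3}` yields a signed graph
admitting a proper `3`-edge coloring. -/
theorem K33_every_signature_three_colorable
    (σ : Sym2 (Fin 3 ⊕ Fin 3) → ℤ)
    (hσ : ∀ e ∈ (completeBipartiteGraph (Fin 3) (Fin 3)).edgeSet,
      σ e = 1 ∨ σ e = -1) :
    ∃ c : SColoring (completeBipartiteGraph (Fin 3) (Fin 3)) σ 3, c.Proper := by
  have hunit (i j : Fin 3) : IsUnit (σ s(.inl i, .inr j)) :=
    Int.isUnit_iff.mpr (hσ _ (by simp))
  obtain ⟨k, a, b, hab⟩ := exists_eq_mul_of_sub_ne fun i j => (hunit i j).unit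
  exact (isSignedLatin_of_eq_mul hab).exists_proper fun i j => (hunit i j).unit_spec.symm
end

section
/- Let Γ be a finite connected 3-regular simple graph with no isthmus that contains a Hamiltonian cycle, and let m = |E(Γ)|. Then the number of signatures σ : E(Γ) → {+1, −1} for which the signed graph (Γ, σ) admits a proper 3-edge coloring is at least 2^{m−1} (i.e., at least half of all 2^m signatures). -/
open SimpleGraph

/-!
Fix a Hamiltonian cycle `C`. If the signs of `σ` along `C` multiply to `1`, then on `C` the
signature `σ` is a switching `σ(ab) = τ(a) τ(b)` of the all-positive one, for some
`τ : V → {±1}`. Colour each edge of `C`, traversed from `a` to `b`, by `τ(a)` at `a` and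
`-τ(b)` at `b`, and every chord by `0`: this satisfies `γ(a,e) = -σ(e) γ(b,e)`, and it is proper
because in a cubic graph each vertex meets at most one chord. Reversing the sign of a fixed edge
of `C` exchanges the signatures that are balanced on `C` with the others, so at least half of
all signatures are balanced.
-/

namespace SimpleGraph.Walk

variable {V : Type*} {G : SimpleGraph V} {σ : Sym2 V → ℤ}

theorem prod_map_edges_eq_of_switching {τ : V → ℤ} (hτ : ∀ x, IsUnit (τ x)) :
    ∀ {u v : V} (p : G.Walk u v), (∀ d ∈ p.darts, σ d.edge = τ d.fst * τ d.snd) →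
      (p.edges.map σ).prod = τ u * τ v
  | u, _, nil, _ => (Int.isUnit_mul_self (hτ u)).symm
  | u, v, cons (v := w) h p, hp => by
    simp only [darts_cons, List.mem_cons, forall_eq_or_imp, Dart.edge_mk] at hp
    rw [edges_cons, List.map_cons, List.prod_cons, prod_map_edges_eq_of_switching hτ p hp.2]
    linear_combination (τ u * τ v) * Int.isUnit_mul_self (hτ w) + τ w * τ v * hp.1

theorem IsPath.exists_switching {u v : V} {p : G.Walk u v} (hp : p.IsPath)
    (hσ : ∀ e ∈ p.edges, IsUnit (σ e)) :
    ∃ τ : V → ℤ, (∀ x, IsUnit (τ x)) ∧ ∀ d ∈ p.darts, σ d.edge = τ d.fst * τ d.snd := by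
  classical
  induction p with
  | nil => exact ⟨1, fun _ => isUnit_one, by simp⟩
  | @cons u w v h p ih =>
    rw [cons_isPath_iff] at hp
    simp only [edges_cons, List.mem_cons, forall_eq_or_imp] at hσ
    obtain ⟨τ, hτ, hpτ⟩ := ih hp.1 hσ.2
    refine ⟨Function.update τ u (σ s(u, w) * τ w), fun x => ?_, ?_⟩
    · rcases eq_or_ne x u with rfl | hx
      · simpa using hσ.1.mul (hτ w)
      · simpa [hx] using hτ x
    · have hne : ∀ d ∈ p.darts, d.fst ≠ u ∧ d.snd ≠ u := fun d hd =>
        ⟨ne_of_mem_of_not_mem (p.dart_fst_mem_support_of_mem_darts hd) hp.2,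
          ne_of_mem_of_not_mem (p.dart_snd_mem_support_of_mem_darts hd) hp.2⟩
      simp only [darts_cons, List.mem_cons, forall_eq_or_imp, Dart.edge_mk]
      refine ⟨?_, fun d hd => ?_⟩
      · simp only [Function.update_self, Function.update_of_ne h.ne.symm]
        linear_combination (-σ s(u, w)) * Int.isUnit_mul_self (hτ w)
      · simp only [Function.update_of_ne (hne d hd).1, Function.update_of_ne (hne d hd).2]
        exact hpτ d hd

theorem IsCycle.exists_switching {u : V} {c : G.Walk u u} (hc : c.IsCycle)
    (hσ : ∀ e ∈ c.edges, IsUnit (σ e)) (hbal : (c.edges.map σ).prod = 1) :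
    ∃ τ : V → ℤ, (∀ x, IsUnit (τ x)) ∧ ∀ d ∈ c.darts, σ d.edge = τ d.fst * τ d.snd := by
  rcases c with _ | ⟨h, p⟩
  · exact absurd hc not_isCycle_nil
  rename_i w
  simp only [edges_cons, List.mem_cons, forall_eq_or_imp] at hσ
  obtain ⟨τ, hτ, hpτ⟩ := ((cons_isCycle_iff p h).1 hc).1.exists_switching hσ.2
  refine ⟨τ, hτ, ?_⟩
  rw [edges_cons, List.map_cons, List.prod_cons, prod_map_edges_eq_of_switching hτ p hpτ] at hbal
  simp only [darts_cons, List.mem_cons, forall_eq_or_imp, Dart.edge_mk]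
  refine ⟨?_, hpτ⟩
  linear_combination (τ u * τ w) * hbal - σ s(u, w) * Int.isUnit_mul_self (hτ u)
    - σ s(u, w) * τ u * τ u * Int.isUnit_mul_self (hτ w)

theorem IsTrail.eq_of_edge_eq_s15 {u v : V} {p : G.Walk u v} (hp : p.IsTrail) {d d' : G.Dart}
    (hd : d ∈ p.darts) (hd' : d' ∈ p.darts) (h : d.edge = d'.edge) : d = d' :=
  List.inj_on_of_nodup_map hp.edges_nodup hd hd' h

theorem IsCycle.eq_of_snd_eq {u : V} {c : G.Walk u u} (hc : c.IsCycle) {d d' : G.Dart}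
    (hd : d ∈ c.darts) (hd' : d' ∈ c.darts) (h : d.snd = d'.snd) : d = d' :=
  List.inj_on_of_nodup_map (by rw [map_snd_darts]; exact hc.support_nodup) hd hd' h

theorem IsCycle.eq_of_fst_eq {u : V} {c : G.Walk u u} (hc : c.IsCycle) {d d' : G.Dart}
    (hd : d ∈ c.darts) (hd' : d' ∈ c.darts) (h : d.fst = d'.fst) : d = d' :=
  List.inj_on_of_nodup_map (by rw [map_fst_darts]; exact hc.nodup_dropLast_support) hd hd' h

section Hamiltonian

variable [DecidableEq V]

theorem IsHamiltonianCycle.mem_support_tail {u : V} {c : G.Walk u u}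
    (hc : c.IsHamiltonianCycle) (v : V) : v ∈ c.support.tail :=
  support_tail_of_not_nil _ hc.not_nil ▸ hc.isHamiltonian_tail.mem_support v

theorem IsHamiltonianCycle.exists_mem_darts_snd_eq {u : V} {c : G.Walk u u}
    (hc : c.IsHamiltonianCycle) (v : V) : ∃ d ∈ c.darts, d.snd = v :=
  List.mem_map.1 <| map_snd_darts c ▸ hc.mem_support_tail v

theorem IsHamiltonianCycle.exists_mem_darts_fst_eq {u : V} {c : G.Walk u u}
    (hc : c.IsHamiltonianCycle) (v : V) : ∃ d ∈ c.darts, d.fst = v :=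
  List.mem_map.1 <| map_fst_darts c ▸
    c.tail_support_perm_dropLast_support.mem_iff.1 (hc.mem_support_tail v)

theorem IsHamiltonianCycle.mem_edges_or_mem_edges {u v w x : V} {c : G.Walk u u}
    (hc : c.IsHamiltonianCycle) [Fintype (G.neighborSet v)] (hdeg : G.degree v ≤ 3)
    (hw : G.Adj v w) (hx : G.Adj v x) (hwx : w ≠ x) : s(v, w) ∈ c.edges ∨ s(v, x) ∈ c.edges := by
  by_contra! ⟨hw', hx'⟩
  obtain ⟨d₁, hd₁, rfl⟩ := hc.exists_mem_darts_fst_eq v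
  obtain ⟨d₂, hd₂, hv⟩ := hc.exists_mem_darts_snd_eq d₁.fst
  have hmem₁ : s(d₁.fst, d₁.snd) ∈ c.edges := List.mem_map_of_mem hd₁
  have hmem₂ : s(d₁.fst, d₂.fst) ∈ c.edges := by
    rw [← hv, Sym2.eq_swap]; exact List.mem_map_of_mem hd₂
  have hne : d₁.snd ≠ d₂.fst := fun h => d₁.fst_ne_snd <| by
    obtain rfl := hc.isTrail.eq_of_edge_eq_s15 hd₁ hd₂ <| by
      rw [Dart.edge, Dart.edge, h, hv, Sym2.eq_swap]
    exact h.symm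
  have hcard : ({w, x, d₁.snd, d₂.fst} : Finset V).card = 4 :=
    Finset.card_eq_four.2 ⟨w, x, d₁.snd, d₂.fst, hwx, fun h => hw' (h ▸ hmem₁),
      fun h => hw' (h ▸ hmem₂), fun h => hx' (h ▸ hmem₁), fun h => hx' (h ▸ hmem₂), hne, rfl⟩
  have hsub : ({w, x, d₁.snd, d₂.fst} : Finset V) ⊆ G.neighborFinset d₁.fst := by
    intro y hy
    simp only [Finset.mem_insert, Finset.mem_singleton] at hy
    rw [mem_neighborFinset]
    rcases hy with rfl | rfl | rfl | rfl
    exacts [hw, hx, d₁.adj, hv ▸ d₂.adj.symm]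
  have := Finset.card_le_card hsub
  rw [hcard, card_neighborFinset_eq_degree] at this
  omega

end Hamiltonian

section IncidenceColor

variable {u v : V} {p : G.Walk u v} {τ : V → ℤ}

open Classical in
noncomputable def incidenceColor (p : G.Walk u v) (τ : V → ℤ) (x : V) (e : Sym2 V) : ℤ :=
  if ∃ d ∈ p.darts, d.fst = x ∧ d.edge = e then τ x
  else if ∃ d ∈ p.darts, d.snd = x ∧ d.edge = e then -τ x else 0

theorem incidenceColor_fst {d : G.Dart} (hd : d ∈ p.darts) :
    p.incidenceColor τ d.fst d.edge = τ d.fst :=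
  if_pos ⟨d, hd, rfl, rfl⟩

theorem IsTrail.incidenceColor_snd (hp : p.IsTrail) {d : G.Dart} (hd : d ∈ p.darts) :
    p.incidenceColor τ d.snd d.edge = -τ d.snd := by
  refine (if_neg ?_).trans (if_pos ⟨d, hd, rfl, rfl⟩)
  rintro ⟨d', hd', hfst, hedge⟩
  obtain rfl := hp.eq_of_edge_eq_s15 hd' hd hedge
  exact d'.fst_ne_snd hfst

theorem incidenceColor_of_notMem_edges {x : V} {e : Sym2 V} (he : e ∉ p.edges) :
    p.incidenceColor τ x e = 0 := by
  rw [incidenceColor, if_neg, if_neg] <;>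
    exact fun ⟨d, hd, _, hde⟩ => he (hde ▸ List.mem_map_of_mem hd)

theorem IsTrail.incidenceColor_cases (hp : p.IsTrail) {x y : V} (hxy : G.Adj x y) :
    ((∃ d ∈ p.darts, d.fst = x ∧ d.snd = y) ∧ p.incidenceColor τ x s(x, y) = τ x) ∨
    ((∃ d ∈ p.darts, d.fst = y ∧ d.snd = x) ∧ p.incidenceColor τ x s(x, y) = -τ x) ∨
    (s(x, y) ∉ p.edges ∧ p.incidenceColor τ x s(x, y) = 0) := by
  by_cases he : s(x, y) ∈ p.edges
  · obtain ⟨⟨⟨a, b⟩, hab⟩, hd, hde⟩ := List.mem_map.1 he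
    rcases Sym2.eq_iff.1 hde with ⟨rfl, rfl⟩ | ⟨rfl, rfl⟩
    · exact .inl ⟨⟨_, hd, rfl, rfl⟩, incidenceColor_fst hd⟩
    · exact .inr <| .inl ⟨⟨_, hd, rfl, rfl⟩, hde ▸ hp.incidenceColor_snd hd⟩
  · exact .inr <| .inr ⟨he, incidenceColor_of_notMem_edges he⟩

theorem incidenceColor_mem_Mset_three (hτ : ∀ x, IsUnit (τ x)) (x : V) (e : Sym2 V) :
    p.incidenceColor τ x e ∈ Mset 3 := by
  have hmem : ∀ a : ℤ, a.natAbs ≤ 1 → a ∈ Mset 3 := fun a ha => ⟨by omega, fun _ => ⟨1, rfl⟩⟩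
  have hx := Int.isUnit_iff_natAbs_eq.1 (hτ x)
  unfold incidenceColor
  split_ifs <;> apply hmem <;> simp [hx]

theorem IsTrail.incidenceColor_eq_neg_mul (hp : p.IsTrail)
    (hτ : ∀ x, IsUnit (τ x)) (hστ : ∀ d ∈ p.darts, σ d.edge = τ d.fst * τ d.snd)
    {x y : V} (hxy : G.Adj x y) :
    p.incidenceColor τ x s(x, y) = -σ s(x, y) * p.incidenceColor τ y s(x, y) := by
  rcases hp.incidenceColor_cases (τ := τ) hxy with
    ⟨⟨d, hd, rfl, rfl⟩, hx⟩ | ⟨⟨d, hd, rfl, rfl⟩, hx⟩ | ⟨he, hx⟩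
  · rw [hx]
    change τ d.fst = -σ d.edge * p.incidenceColor τ d.snd d.edge
    rw [hp.incidenceColor_snd hd, hστ d hd]
    linear_combination -(τ d.fst) * Int.isUnit_mul_self (hτ d.snd)
  · rw [hx, Sym2.eq_swap]
    change -τ d.snd = -σ d.edge * p.incidenceColor τ d.fst d.edge
    rw [incidenceColor_fst hd, hστ d hd]
    linear_combination τ d.snd * Int.isUnit_mul_self (hτ d.fst)
  · rw [hx, incidenceColor_of_notMem_edges he, mul_zero]

theorem IsHamiltonianCycle.incidenceColor_ne [DecidableEq V] {c : G.Walk u u}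
    (hc : c.IsHamiltonianCycle) (hτ : ∀ x, IsUnit (τ x)) {x y z : V} [Fintype (G.neighborSet x)]
    (hdeg : G.degree x ≤ 3) (hy : G.Adj x y) (hz : G.Adj x z) (hyz : y ≠ z) :
    c.incidenceColor τ x s(x, y) ≠ c.incidenceColor τ x s(x, z) := by
  have hτx : τ x ≠ 0 := (hτ x).ne_zero
  intro h
  rcases hc.isTrail.incidenceColor_cases (τ := τ) hy with
    ⟨⟨d, hd, hdx, hdy⟩, h₁⟩ | ⟨⟨d, hd, hdy, hdx⟩, h₁⟩ | ⟨hy', h₁⟩ <;>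
  rcases hc.isTrail.incidenceColor_cases (τ := τ) hz with
    ⟨⟨d', hd', hdx', hdz⟩, h₂⟩ | ⟨⟨d', hd', hdz, hdx'⟩, h₂⟩ | ⟨hz', h₂⟩ <;>
  rw [h₁, h₂] at h <;> try omega
  · obtain rfl := hc.isCycle.eq_of_fst_eq hd hd' (hdx.trans hdx'.symm)
    exact hyz (hdy.symm.trans hdz)
  · obtain rfl := hc.isCycle.eq_of_snd_eq hd hd' (hdx.trans hdx'.symm)
    exact hyz (hdy.symm.trans hdz)
  · exact (hc.mem_edges_or_mem_edges hdeg hy hz hyz).elim hy' hz'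

theorem IsHamiltonianCycle.exists_proper_of_prod_eq_one [DecidableEq V] {c : G.Walk u u}
    (hc : c.IsHamiltonianCycle) [∀ x, Fintype (G.neighborSet x)]
    (hdeg : ∀ x, G.degree x ≤ 3) (hσ : ∀ e ∈ c.edges, IsUnit (σ e))
    (hbal : (c.edges.map σ).prod = 1) : ∃ γ : SColoring G σ 3, γ.Proper := by
  obtain ⟨τ, hτ, hστ⟩ := hc.isCycle.exists_switching hσ hbal
  exact ⟨⟨c.incidenceColor τ, fun x _ _ => incidenceColor_mem_Mset_three hτ x _,
    fun _ _ h => hc.isTrail.incidenceColor_eq_neg_mul hτ hστ h⟩,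
    fun x _ _ hy hz hyz => hc.incidenceColor_ne hτ (hdeg x) hy hz hyz⟩

end IncidenceColor

end SimpleGraph.Walk

theorem Set.two_mul_ncard_eq_of_involutive {β : Type*} [Finite β] {S : Set β} {f : β → β}
    (hf : Function.Involutive f) (hS : ∀ x, f x ∈ S ↔ x ∉ S) : 2 * S.ncard = Nat.card β := by
  have himage : f '' S = Sᶜ := by
    ext x
    refine ⟨?_, fun hx => ⟨f x, (hS x).2 hx, hf x⟩⟩
    rintro ⟨y, hy, rfl⟩
    exact fun h => (hS y).1 h hy
  rw [two_mul, ← Set.ncard_add_ncard_compl S, ← himage, Set.ncard_image_of_injective S hf.injective]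

theorem List.prod_map_update_neg {α M : Type*} [DecidableEq α] [Monoid M] [HasDistribNeg M]
    (f : α → M) {a : α} : ∀ {l : List α}, l.Nodup → a ∈ l →
      (l.map (Function.update f a (-f a))).prod = -(l.map f).prod
  | b :: l, hl, ha => by
    rw [List.nodup_cons] at hl
    rw [List.map_cons, List.map_cons, List.prod_cons, List.prod_cons]
    rcases List.mem_cons.1 ha with rfl | ha
    · rw [List.map_congr_left fun x hx => Function.update_of_ne (ne_of_mem_of_not_mem hx hl.1) _ _,
        Function.update_self, neg_mul]
    · rw [Function.update_of_ne (ne_of_mem_of_not_mem ha hl.1).symm,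
        List.prod_map_update_neg f hl.2 ha, mul_neg]

namespace SimpleGraph

variable {V : Type*} (G : SimpleGraph V)

-- The value `1` off `G.edgeSet` is a junk value.
open Classical in
noncomputable def boolSignature (s : G.edgeSet → Bool) (e : Sym2 V) : ℤ :=
  if h : e ∈ G.edgeSet then (if s ⟨e, h⟩ then 1 else -1) else 1

theorem boolSignature_coe (s : G.edgeSet → Bool) (e : G.edgeSet) :
    G.boolSignature s e = if s e then 1 else -1 :=
  dif_pos e.2

theorem isUnit_boolSignature (s : G.edgeSet → Bool) (e : Sym2 V) :
    IsUnit (G.boolSignature s e) := by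
  unfold boolSignature
  split_ifs <;> simp

theorem boolSignature_update_not [DecidableEq V] (s : G.edgeSet → Bool) (e : G.edgeSet) :
    G.boolSignature (Function.update s e (!s e)) =
      Function.update (G.boolSignature s) e (-G.boolSignature s e) := by
  funext e'
  by_cases he' : e' ∈ G.edgeSet
  · obtain rfl | hne := eq_or_ne (⟨e', he'⟩ : G.edgeSet) e
    · cases h : s ⟨e', he'⟩ <;> simp [boolSignature, he', h]
    · have hne' : e' ≠ e := fun h => hne (Subtype.ext h)
      simp only [boolSignature, he', dif_pos, Function.update_of_ne hne, Function.update_of_ne hne']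
  · simp only [boolSignature, he', dif_neg, not_false_eq_true,
      Function.update_of_ne (fun h : e' = e => he' (h ▸ e.2))]

end SimpleGraph

theorem hamiltonian_cubic_class_ratio_general {V : Type*} [Fintype V] [DecidableEq V]
    (G : SimpleGraph V) [DecidableRel G.Adj]
    (hreg : ∀ v : V, G.degree v = 3)
    (hham : ∃ (v : V) (W : G.Walk v v), W.IsHamiltonianCycle) :
    2 ^ (G.edgeFinset.card - 1) ≤
      {s : G.edgeSet → Bool | ∃ σ : Sym2 V → ℤ,
        (∀ e : G.edgeSet, σ e.1 = if s e then 1 else -1) ∧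
        ∃ c : SColoring G σ 3, c.Proper}.ncard := by
  obtain ⟨u, W, hW⟩ := hham
  obtain ⟨e₀, he₀⟩ : ∃ e : G.edgeSet, e.1 ∈ W.edges := by
    obtain ⟨e, he⟩ := List.exists_mem_of_ne_nil W.edges (by simpa using hW.not_nil)
    exact ⟨⟨e, W.edges_subset_edgeSet he⟩, he⟩
  set balanced := {s : G.edgeSet → Bool | (W.edges.map (G.boolSignature s)).prod = 1}
  have hflip : ∀ s, Function.update s e₀ (!s e₀) ∈ balanced ↔ s ∉ balanced := fun s => by
    have hunit := Int.isUnit_iff.1 <| List.prod_isUnit (L := W.edges.map (G.boolSignature s))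
      (by simp [G.isUnit_boolSignature])
    simp only [balanced, Set.mem_ofPred_eq, G.boolSignature_update_not,
      List.prod_map_update_neg _ hW.isCycle.edges_nodup he₀]
    omega
  have hcard : 2 * balanced.ncard = 2 ^ G.edgeFinset.card := by
    rw [Set.two_mul_ncard_eq_of_involutive (fun s => by simp) hflip, Nat.card_eq_fintype_card,
      Fintype.card_fun, Fintype.card_bool, G.edgeFinset_card]
  have hm : G.edgeFinset.card ≠ 0 := Finset.card_ne_zero.2 ⟨e₀, by simp⟩
  calc 2 ^ (G.edgeFinset.card - 1) = balanced.ncard := by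
        rw [← Nat.sub_one_add_one hm, pow_succ'] at hcard; omega
    _ ≤ _ := by
      refine Set.ncard_le_ncard fun s hs => ⟨G.boolSignature s, G.boolSignature_coe s, ?_⟩
      exact hW.exists_proper_of_prod_eq_one (fun v => (hreg v).le)
        (fun e _ => G.isUnit_boolSignature s e) hs

/-- For a Hamiltonian connected isthmus-free `3`-regular graph `Γ` with `m` edges, at
least `2^(m-1)` of the `2^m` signatures (here encoded as functions `E(Γ) → Bool`, with
`true ↦ +1` and `false ↦ -1`) yield a properly `3`-edge colorable signed graph. -/
theorem hamiltonian_cubic_class_ratio {V : Type*} [Fintype V] [DecidableEq V]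
    (G : SimpleGraph V) [DecidableRel G.Adj]
    (hconn : G.Connected) (hreg : ∀ v : V, G.degree v = 3)
    (hbridge : ∀ e ∈ G.edgeSet, ¬G.IsBridge e)
    (hham : ∃ (v : V) (W : G.Walk v v), W.IsHamiltonianCycle) :
    2 ^ (G.edgeFinset.card - 1) ≤
      {s : G.edgeSet → Bool | ∃ σ : Sym2 V → ℤ,
        (∀ e : G.edgeSet, σ e.1 = if s e then 1 else -1) ∧
        ∃ c : SColoring G σ 3, c.Proper}.ncard :=
  hamiltonian_cubic_class_ratio_general G hreg hham
end

section
/- Let n ≥ 3 be odd and let σ be a signature on the complete graph K_n such that the number of negative edges (edges e with σ(e) = −1) is odd. Then the signed graph (K_n, σ) does not admit a proper (n−1)-edge coloring; that is, it cannot be edge colored with Δ(K_n) = n−1 colors. (Consequently at most half of all signatures on K_n are Δ-colorable.) -/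
open SimpleGraph

/-! Write `n = 2k + 1`. The `n - 1 = 2k` colors are `±1, …, ±k`, and every vertex has degree `2k`,
so a proper coloring uses each color exactly once at each vertex. Hence the product of the signs
of the colors over all incidences is `((-1) ^ k) ^ n = (-1) ^ |E|`, as `|E| = kn`. On the other
hand, `γ(v,e) = -σ(e) γ(w,e)` makes the two incidences of an edge `e` contribute `-σ(e)`, so the
same product is `(-1) ^ |E| ∏ σ(e) = (-1) ^ (|E| + m)` with `m` the number of negative edges.
Thus `m` is even. -/

open Finset

theorem prod_eq_neg_one_pow_card_filter {ι M : Type*} [CommMonoid M] [HasDistribNeg M]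
    {s : Finset ι} {f : ι → M} [DecidablePred (f · = -1)] (hf : ∀ i ∈ s, f i = 1 ∨ f i = -1) :
    ∏ i ∈ s, f i = (-1) ^ #{i ∈ s | f i = -1} := by
  rw [← prod_filter_mul_prod_filter_not s (f · = -1), prod_congr rfl fun i hi => (mem_filter.1 hi).2,
    prod_const, prod_eq_one fun i hi => ?_, mul_one]
  obtain ⟨his, hi⟩ := mem_filter.1 hi
  exact (hf i his).resolve_right hi

theorem Mset_two_mul (k : ℕ) : Mset (2 * k) = ↑((Icc (-(k : ℤ)) k).erase 0) := by
  ext a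
  simp only [Mset, Set.mem_ofPred_eq, coe_erase, coe_Icc, Set.mem_sdiff, Set.mem_Icc,
    Set.mem_singleton_iff, Nat.odd_iff]
  omega

theorem prod_sign_Icc_erase_zero (k : ℕ) : ∏ a ∈ (Icc (-(k : ℤ)) k).erase 0, a.sign = (-1) ^ k := by
  rw [prod_eq_neg_one_pow_card_filter fun a ha => ?_]
  · congr
    have : {a ∈ (Icc (-(k : ℤ)) k).erase 0 | a.sign = -1} = Icc (-(k : ℤ)) (-1) := by
      ext a
      simp only [mem_filter, mem_erase, mem_Icc, Int.sign_eq_neg_one_iff_neg]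
      omega
    rw [this, Int.card_Icc]
    omega
  · rcases (mem_erase.1 ha).1.lt_or_gt with h | h
    · exact .inr (Int.sign_eq_neg_one_of_neg h)
    · exact .inl (Int.sign_eq_one_of_pos h)

namespace SColoring

variable {V : Type*} {G : SimpleGraph V} {σ : Sym2 V → ℤ} {n : ℕ}

/-- An incidence `(v, e)` is encoded as a dart `d` with `d.fst = v` and `d.edge = e`. -/
def dartCol (c : SColoring G σ n) (d : G.Dart) : ℤ := c.col d.fst d.edge

theorem dartCol_eq_neg_mul_dartCol_symm (c : SColoring G σ n) (d : G.Dart) :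
    c.dartCol d = -σ d.edge * c.dartCol d.symm := by
  rw [dartCol, dartCol, Dart.edge_symm]
  exact c.compat d.adj

theorem zeroFree_of_even (c : SColoring G σ n) (hn : Even n) : c.ZeroFree :=
  fun _ _ h h0 => Nat.not_odd_iff_even.2 hn ((c.mem_colors h).2 h0)

theorem sign_dartCol_mul_sign_dartCol_symm (c : SColoring G σ n) (hc : c.ZeroFree)
    (hσ : ∀ e ∈ G.edgeSet, σ e = 1 ∨ σ e = -1) (d : G.Dart) :
    (c.dartCol d).sign * (c.dartCol d.symm).sign = -σ d.edge := by
  have hne : c.dartCol d.symm ≠ 0 := hc d.symm.adj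
  rw [← Int.sign_mul, c.dartCol_eq_neg_mul_dartCol_symm, mul_assoc, Int.sign_mul,
    Int.sign_eq_one_of_pos (mul_self_pos.2 hne), mul_one]
  rcases hσ d.edge d.edge_mem with h | h <;> simp [h]

section Finite

variable [Fintype V] [DecidableRel G.Adj] [DecidableEq V]

theorem prod_sign_dartCol_eq_prod_edgeFinset (c : SColoring G σ n) (hc : c.ZeroFree)
    (hσ : ∀ e ∈ G.edgeSet, σ e = 1 ∨ σ e = -1) :
    ∏ d : G.Dart, (c.dartCol d).sign = ∏ e ∈ G.edgeFinset, -σ e := by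
  rw [← prod_fiberwise_of_maps_to (g := Dart.edge) fun d _ => mem_edgeFinset.2 d.edge_mem]
  refine prod_congr rfl fun e he => ?_
  obtain ⟨d, rfl⟩ : ∃ d : G.Dart, d.edge = e := by
    induction e using Sym2.ind with
    | _ v w => exact ⟨⟨(v, w), mem_edgeFinset.1 he⟩, rfl⟩
  rw [Dart.edge_fiber, prod_pair d.symm_ne.symm, c.sign_dartCol_mul_sign_dartCol_symm hc hσ]

theorem injOn_dartCol_fst_fiber (c : SColoring G σ n) (hc : c.Proper) (v : V) :
    Set.InjOn c.dartCol ↑({d : G.Dart | d.fst = v} : Finset G.Dart) := by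
  rintro ⟨⟨u, w⟩, huw⟩ h₁ ⟨⟨u', x⟩, hux⟩ h₂ hcol
  simp only [coe_filter, mem_univ, true_and, Set.mem_ofPred_eq] at h₁ h₂
  subst h₁ h₂
  by_contra hne
  exact hc huw hux (fun hwx => hne (by subst hwx; rfl)) hcol

theorem image_dartCol_fst_fiber {k : ℕ} (c : SColoring G σ (2 * k)) (hc : c.Proper) {v : V}
    (hv : G.degree v = 2 * k) :
    ({d : G.Dart | d.fst = v} : Finset G.Dart).image c.dartCol = (Icc (-(k : ℤ)) k).erase 0 := by
  refine eq_of_subset_of_card_le (fun a ha => ?_) ?_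
  · obtain ⟨d, -, rfl⟩ := mem_image.1 ha
    have := c.mem_colors d.adj
    rwa [Mset_two_mul, mem_coe] at this
  · rw [card_image_of_injOn (c.injOn_dartCol_fst_fiber hc v), dart_fst_fiber_card_eq_degree, hv,
      card_erase_of_mem (by simp), Int.card_Icc]
    omega

theorem prod_sign_dartCol_of_isRegularOfDegree {k : ℕ} (c : SColoring G σ (2 * k))
    (hc : c.Proper) (hG : G.IsRegularOfDegree (2 * k)) :
    ∏ d : G.Dart, (c.dartCol d).sign = ((-1) ^ k) ^ Fintype.card V := by
  rw [← prod_fiberwise univ fun d : G.Dart => d.fst, ← card_univ, ← prod_const]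
  refine prod_congr rfl fun v _ => ?_
  rw [← prod_image (f := Int.sign) (c.injOn_dartCol_fst_fiber hc v),
    c.image_dartCol_fst_fiber hc (hG v), prod_sign_Icc_erase_zero]

end Finite

end SColoring

theorem Kn_odd_negative_not_deltaColorable_general (n : ℕ) (hn : Odd n)
    (σ : Sym2 (Fin n) → ℤ)
    (hσ : ∀ e ∈ (⊤ : SimpleGraph (Fin n)).edgeSet, σ e = 1 ∨ σ e = -1)
    (hodd : Odd {e : Sym2 (Fin n) |
      e ∈ (⊤ : SimpleGraph (Fin n)).edgeSet ∧ σ e = -1}.ncard) :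
    ¬∃ c : SColoring (⊤ : SimpleGraph (Fin n)) σ (n - 1), c.Proper := by
  classical
  obtain ⟨k, rfl⟩ := hn
  rw [Nat.add_sub_cancel]
  rintro ⟨c, hc⟩
  have hregular : (⊤ : SimpleGraph (Fin (2 * k + 1))).IsRegularOfDegree (2 * k) := by
    simpa using IsRegularOfDegree.top (V := Fin (2 * k + 1))
  have hcard_edges : #(⊤ : SimpleGraph (Fin (2 * k + 1))).edgeFinset = k * (2 * k + 1) := by
    rw [card_edgeFinset_top_eq_card_choose_two, Fintype.card_fin, Nat.choose_two_right,
      Nat.add_sub_cancel, mul_left_comm, Nat.mul_div_cancel_left _ two_pos, mul_comm]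
  have hcard_negative : {e : Sym2 (Fin (2 * k + 1)) |
      e ∈ (⊤ : SimpleGraph (Fin (2 * k + 1))).edgeSet ∧ σ e = -1}.ncard =
      #{e ∈ (⊤ : SimpleGraph (Fin (2 * k + 1))).edgeFinset | σ e = -1} := by
    rw [← Set.ncard_coe_finset]
    congr
    ext e
    simp
  have hvertices := c.prod_sign_dartCol_of_isRegularOfDegree hc hregular
  have hedges := c.prod_sign_dartCol_eq_prod_edgeFinset (c.zeroFree_of_even (even_two_mul k)) hσ
  rw [hedges, prod_neg,
    prod_eq_neg_one_pow_card_filter fun e he => hσ e (mem_edgeFinset.1 he), hcard_edges,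
    Fintype.card_fin, ← pow_mul, mul_eq_left₀ (by simp), neg_one_pow_eq_one_iff_even (by decide),
    ← hcard_negative] at hvertices
  exact Nat.not_even_iff_odd.2 hodd hvertices

/-- If `n ≥ 3` is odd and the signature `σ` on the complete graph `K n` has an odd
number of negative edges, then `(K n, σ)` admits no proper `(n-1)`-edge coloring. -/
theorem Kn_odd_negative_not_deltaColorable (n : ℕ) (hn : Odd n) (hn3 : 3 ≤ n)
    (σ : Sym2 (Fin n) → ℤ)
    (hσ : ∀ e ∈ (⊤ : SimpleGraph (Fin n)).edgeSet, σ e = 1 ∨ σ e = -1)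
    (hodd : Odd {e : Sym2 (Fin n) |
      e ∈ (⊤ : SimpleGraph (Fin n)).edgeSet ∧ σ e = -1}.ncard) :
    ¬∃ c : SColoring (⊤ : SimpleGraph (Fin n)) σ (n - 1), c.Proper :=
  Kn_odd_negative_not_deltaColorable_general n hn σ hσ hodd
end

section
/- Let Σ = (Γ, σ) be a signed simple graph and let τ be an orientation of Σ, i.e., a function τ : I(Γ) → {+1, −1} on the incidences of Γ with σ(e) = −τ(v,e)·τ(w,e) for every edge e with endpoints v and w. Define a signed graph Λ⁻ on vertex set E(Γ) by: distinct edges e, f of Γ are adjacent in Λ⁻ if and only if they share an endpoint in Γ, and the sign of the edge ef of Λ⁻ is τ(v,e)·τ(v,f), where v is the common endpoint of e and f. Then the map sending a proper n-edge coloring γ of Σ to the function c : E(Γ) → M_n given by c(e) = τ(v,e)·γ(v,e) (which is independent of the choice of endpoint v of e) is a bijection between the proper n-edge colorings of Σ and the proper signed vertex n-colorings of Λ⁻. -/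
/-!
Since `τ` takes the values `±1`, multiplying incidence colors by `τ` is invertible, and it turns
the edge-coloring rule `γ(v,e) = τ(v,e) τ(w,e) γ(w,e)` into the statement that `τ(v,e) γ(v,e)`
does not depend on the endpoint `v` of `e`, i.e. is a function `c` of the edge alone.
Conversely `γ(v,e) = τ(v,e) c(e)`. Under this correspondence two edges `e ≠ f` at a vertex `v`
get the same color at `v` exactly when `c(e) = τ(v,e) τ(v,f) c(f)`, which is the properness
condition for the edge `ef` of `Λ⁻`.
-/

open SimpleGraph

lemma mul_mem_Mset {n : ℕ} {t a : ℤ} (ht : IsUnit t) (ha : a ∈ Mset n) : t * a ∈ Mset n := by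
  obtain ⟨hle, hodd⟩ := ha
  refine ⟨?_, fun h => hodd (ht.mul_right_eq_zero.mp h)⟩
  rwa [Int.natAbs_mul, Int.isUnit_iff_natAbs_eq.mp ht, one_mul]

lemma Int.mul_eq_iff_eq_mul_of_isUnit {t a b : ℤ} (ht : IsUnit t) : t * a = b ↔ a = t * b := by
  constructor <;> rintro rfl <;> rw [← mul_assoc, Int.isUnit_mul_self ht, one_mul]

section LineGraph

variable {V : Type*} {G : SimpleGraph V} {τ : V → Sym2 V → ℤ}

def Inc.edge_s19 (i : Inc G) : G.edgeSet :=
  ⟨i.1.2, i.2.1⟩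

variable (τ) in
noncomputable def vertexColoringOf (γ : Inc G → ℤ) (e : G.edgeSet) : ℤ :=
  τ e.1.out.1 e.1 * γ ⟨(e.1.out.1, e.1), e.2, Sym2.out_fst_mem e.1⟩

variable (τ) in
def edgeColoringOf (c : G.edgeSet → ℤ) (i : Inc G) : ℤ :=
  τ i.1.1 i.1.2 * c i.edge_s19

variable (hτ : ∀ ⦃v w : V⦄, G.Adj v w → τ v s(v, w) = 1 ∨ τ v s(v, w) = -1)
include hτ

lemma isUnit_orientation {e : Sym2 V} (he : e ∈ G.edgeSet) {v : V} (hv : v ∈ e) :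
    IsUnit (τ v e) := by
  obtain ⟨w, rfl⟩ := Sym2.mem_iff_exists.mp hv
  exact Int.isUnit_iff.mpr (hτ (G.mem_edgeSet.mp he))

lemma vertexColoringOf_edgeColoringOf (c : G.edgeSet → ℤ) :
    vertexColoringOf τ (edgeColoringOf τ c) = c := by
  funext e
  exact (Int.mul_eq_iff_eq_mul_of_isUnit
    (isUnit_orientation hτ e.2 (Sym2.out_fst_mem e.1))).mpr rfl

lemma orientation_mul_eq_of_isEdgeColoringWith {σ : Sym2 V → ℤ} {S : Set ℤ} {γ : Inc G → ℤ}
    (hτσ : ∀ ⦃v w : V⦄, G.Adj v w → σ s(v, w) = -(τ v s(v, w) * τ w s(v, w)))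
    (hγ : IsEdgeColoringWith G σ S γ) {i j : Inc G} (hij : i.edge_s19 = j.edge_s19) :
    τ i.1.1 i.1.2 * γ i = τ j.1.1 j.1.2 * γ j := by
  obtain ⟨⟨v, e⟩, he, hv⟩ := i
  obtain ⟨⟨w, e'⟩, he', hw⟩ := j
  obtain rfl : e = e' := congrArg Subtype.val hij
  rcases eq_or_ne v w with rfl | hvw
  · rfl
  obtain rfl : e = s(v, w) := (Sym2.mem_and_mem_iff hvw).mp ⟨hv, hw⟩
  have hadj : G.Adj v w := G.mem_edgeSet.mp he
  have hrule := hγ.2 hadj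
  rw [hτσ hadj, neg_neg, mul_assoc] at hrule
  exact (Int.mul_eq_iff_eq_mul_of_isUnit (isUnit_orientation hτ he hv)).mpr hrule

lemma edgeColoringOf_vertexColoringOf {σ : Sym2 V → ℤ} {S : Set ℤ} {γ : Inc G → ℤ}
    (hτσ : ∀ ⦃v w : V⦄, G.Adj v w → σ s(v, w) = -(τ v s(v, w) * τ w s(v, w)))
    (hγ : IsEdgeColoringWith G σ S γ) :
    edgeColoringOf τ (vertexColoringOf τ γ) = γ := by
  funext i
  refine (Int.mul_eq_iff_eq_mul_of_isUnit (isUnit_orientation hτ i.2.1 i.2.2)).mpr ?_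
  exact orientation_mul_eq_of_isEdgeColoringWith hτ hτσ hγ
    (i := ⟨(i.1.2.out.1, i.1.2), i.2.1, Sym2.out_fst_mem _⟩) (j := i) rfl

lemma isEdgeColoringWith_edgeColoringOf {σ : Sym2 V → ℤ} {n : ℕ} {c : G.edgeSet → ℤ}
    (hτσ : ∀ ⦃v w : V⦄, G.Adj v w → σ s(v, w) = -(τ v s(v, w) * τ w s(v, w)))
    (hc : ∀ e, c e ∈ Mset n) :
    IsEdgeColoringWith G σ (Mset n) (edgeColoringOf τ c) := by
  refine ⟨fun i => mul_mem_Mset (isUnit_orientation hτ i.2.1 i.2.2) (hc _), ?_⟩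
  intro v w hadj
  have hw := isUnit_orientation hτ (G.mem_edgeSet.mpr hadj) (Sym2.mem_mk_right v w)
  show τ v s(v, w) * c ⟨s(v, w), _⟩ = -σ s(v, w) * (τ w s(v, w) * c ⟨s(v, w), _⟩)
  rw [hτσ hadj, neg_neg, mul_assoc, ← mul_assoc (τ w s(v, w)), Int.isUnit_mul_self hw, one_mul]

variable {σL : Sym2 G.edgeSet → ℤ}
  (hσL : ∀ (e f : G.edgeSet) (v : V), e ≠ f → v ∈ e.1 → v ∈ f.1 →
    σL s(e, f) = τ v e.1 * τ v f.1)
include hσL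

lemma edgeColoringOf_eq_iff (c : G.edgeSet → ℤ) {e f : G.edgeSet} {v : V} (hef : e ≠ f)
    (hve : v ∈ e.1) (hvf : v ∈ f.1) :
    edgeColoringOf τ c ⟨(v, e.1), e.2, hve⟩ = edgeColoringOf τ c ⟨(v, f.1), f.2, hvf⟩ ↔
      c e = σL s(e, f) * c f := by
  rw [hσL e f v hef hve hvf, mul_assoc]
  exact Int.mul_eq_iff_eq_mul_of_isUnit (isUnit_orientation hτ e.2 hve)

lemma isProperInc_edgeColoringOf_iff (c : G.edgeSet → ℤ) :
    IsProperInc G (edgeColoringOf τ c) ↔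
      ∀ e f : G.edgeSet, e ≠ f → (∃ v : V, v ∈ e.1 ∧ v ∈ f.1) → c e ≠ σL s(e, f) * c f := by
  constructor
  · rintro hγ e f hef ⟨v, hve, hvf⟩
    rw [Ne, ← edgeColoringOf_eq_iff hτ hσL c hef hve hvf]
    exact hγ _ _ rfl fun h => hef (Subtype.ext h)
  · rintro hc ⟨⟨v, e⟩, he, hve⟩ ⟨⟨w, f⟩, hf, hwf⟩ (rfl : v = w) hne
    have hef : (⟨e, he⟩ : G.edgeSet) ≠ ⟨f, hf⟩ := fun h => hne (congrArg Subtype.val h)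
    rw [Ne, edgeColoringOf_eq_iff hτ hσL c hef hve hwf]
    exact hc _ _ hef ⟨v, hve, hwf⟩

end LineGraph

theorem line_graph_coloring_bijection_general {V : Type*} (G : SimpleGraph V)
    (σ : Sym2 V → ℤ) (n : ℕ) (τ : V → Sym2 V → ℤ)
    (hτ : ∀ ⦃v w : V⦄, G.Adj v w → τ v s(v, w) = 1 ∨ τ v s(v, w) = -1)
    (hτσ : ∀ ⦃v w : V⦄, G.Adj v w → σ s(v, w) = -(τ v s(v, w) * τ w s(v, w)))
    (σL : Sym2 G.edgeSet → ℤ)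
    (hσL : ∀ (e f : G.edgeSet) (v : V), e ≠ f → v ∈ e.1 → v ∈ f.1 →
      σL s(e, f) = τ v e.1 * τ v f.1) :
    Set.BijOn
      (fun (γ : Inc G → ℤ) (e : G.edgeSet) =>
        τ e.1.out.1 e.1 * γ ⟨(e.1.out.1, e.1), e.2, Sym2.out_fst_mem e.1⟩)
      {γ : Inc G → ℤ | IsEdgeColoringWith G σ (Mset n) γ ∧ IsProperInc G γ}
      {c : G.edgeSet → ℤ | (∀ e, c e ∈ Mset n) ∧
        ∀ e f : G.edgeSet, e ≠ f → (∃ v : V, v ∈ e.1 ∧ v ∈ f.1) →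
          c e ≠ σL s(e, f) * c f} := by
  refine Set.InvOn.bijOn (f := vertexColoringOf τ) (f' := edgeColoringOf τ)
    ⟨fun γ hγ => edgeColoringOf_vertexColoringOf hτ hτσ hγ.1,
      fun c _ => vertexColoringOf_edgeColoringOf hτ c⟩ ?_ ?_
  · rintro γ ⟨hγ, hproper⟩
    refine ⟨fun e => mul_mem_Mset (isUnit_orientation hτ e.2 (Sym2.out_fst_mem e.1)) (hγ.1 _), ?_⟩
    rw [← isProperInc_edgeColoringOf_iff hτ hσL, edgeColoringOf_vertexColoringOf hτ hτσ hγ]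
    exact hproper
  · rintro c ⟨hc, hproper⟩
    exact ⟨isEdgeColoringWith_edgeColoringOf hτ hτσ hc,
      (isProperInc_edgeColoringOf_iff hτ hσL c).mpr hproper⟩

/-- Given an orientation `τ` of the signed graph `Σ = (G, σ)` and the signed graph `Λ⁻`
on vertex set `E(G)` (adjacency: sharing an endpoint, with the sign of the edge `ef`
being `τ(v,e)·τ(v,f)` for the common endpoint `v` — the negation of the line graph
of `Σ`), the map `γ ↦ (e ↦ τ(v,e)·γ(v,e))` is a bijection from the proper `n`-edge
colorings of `Σ` onto the proper signed vertex `n`-colorings of `Λ⁻`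
(in Zaslavsky's sense). -/
theorem line_graph_coloring_bijection {V : Type*} [Fintype V] (G : SimpleGraph V)
    (σ : Sym2 V → ℤ) (n : ℕ) (τ : V → Sym2 V → ℤ)
    (hτ : ∀ ⦃v w : V⦄, G.Adj v w → τ v s(v, w) = 1 ∨ τ v s(v, w) = -1)
    (hτσ : ∀ ⦃v w : V⦄, G.Adj v w → σ s(v, w) = -(τ v s(v, w) * τ w s(v, w)))
    (σL : Sym2 G.edgeSet → ℤ)
    (hσL : ∀ (e f : G.edgeSet) (v : V), e ≠ f → v ∈ e.1 → v ∈ f.1 →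
      σL s(e, f) = τ v e.1 * τ v f.1) :
    Set.BijOn
      (fun (γ : Inc G → ℤ) (e : G.edgeSet) =>
        τ e.1.out.1 e.1 * γ ⟨(e.1.out.1, e.1), e.2, Sym2.out_fst_mem e.1⟩)
      {γ : Inc G → ℤ | IsEdgeColoringWith G σ (Mset n) γ ∧ IsProperInc G γ}
      {c : G.edgeSet → ℤ | (∀ e, c e ∈ Mset n) ∧
        ∀ e f : G.edgeSet, e ≠ f → (∃ v : V, v ∈ e.1 ∧ v ∈ f.1) →
          c e ≠ σL s(e, f) * c f} :=
  line_graph_coloring_bijection_general G σ n τ hτ hτσ σL hσL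
end
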